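/- arXiv:1306.3750 — 9 statements merged into one kernel-verified Lean document; each statement's English description precedes it below -/
import Mathlib

section
/- If (A_n) is a sequence of events with P(A_n) → 0 and ∑_{n=1}^∞ P(A_n ∩ A_{n+1}^c) < ∞, then P(limsup A_n) = 0. -/
/-!
A point lying in infinitely many `A n` either eventually stays in `A`, which is a null event
because `μ (A n) → 0`, or leaves `A` infinitely often, i.e. lies in infinitely many
`A n ∩ (A (n + 1))ᶜ`, which is a null event by Borel–Cantelli.
-/

open MeasureTheory Filter

theorem Filter.eventually_atTop_of_frequently_of_eventually_imp_succ {p : ℕ → Prop}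
    (hfreq : ∃ᶠ n in atTop, p n) (hstep : ∀ᶠ n in atTop, p n → p (n + 1)) :
    ∀ᶠ n in atTop, p n := by
  obtain ⟨N, hN⟩ := eventually_atTop.1 hstep
  obtain ⟨k, hNk, hpk⟩ := frequently_atTop.1 hfreq N
  refine eventually_atTop.2 ⟨k, fun j hkj => ?_⟩
  induction j, hkj using Nat.le_induction with
  | base => exact hpk
  | succ j hkj ih => exact hN j (hNk.trans hkj) ih

theorem Set.limsup_subset_liminf_union_limsup_inter_compl_succ {α : Type*} (A : ℕ → Set α) :
    limsup A atTop ⊆ liminf A atTop ∪ limsup (fun n => A n ∩ (A (n + 1))ᶜ) atTop := by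
  intro ω hω
  rw [Set.mem_union, or_iff_not_imp_right]
  intro hno_exit
  simp only [mem_limsup_iff_frequently_mem, mem_liminf_iff_eventually_mem, not_frequently,
    Set.mem_inter_iff, Set.mem_compl_iff, not_and, not_not] at *
  exact eventually_atTop_of_frequently_of_eventually_imp_succ hω hno_exit

theorem MeasureTheory.measure_liminf_atTop_eq_zero_of_tendsto {α F : Type*}
    [FunLike F (Set α) ENNReal] [OuterMeasureClass F α] {μ : F} {s : ℕ → Set α}
    (h : Tendsto (fun n => μ (s n)) atTop (nhds 0)) : μ (liminf s atTop) = 0 := by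
  rw [liminf_eq_iSup_iInf_of_nat]
  refine measure_iUnion_null fun n => le_antisymm ?_ zero_le
  exact ge_of_tendsto h
    (eventually_atTop.2 ⟨n, fun m hm => measure_mono (Set.biInter_subset_of_mem hm)⟩)

theorem stmt0_general {Ω : Type*} [MeasurableSpace Ω] (μ : Measure Ω)
    (A : ℕ → Set Ω)
    (h0 : Tendsto (fun n => μ (A n)) atTop (nhds 0))
    (hsum : ∑' n, μ (A n ∩ (A (n + 1))ᶜ) ≠ ⊤) :
    μ (limsup A atTop) = 0 :=
  measure_mono_null (Set.limsup_subset_liminf_union_limsup_inter_compl_succ A)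
    (measure_union_null (measure_liminf_atTop_eq_zero_of_tendsto h0)
      (measure_limsup_atTop_eq_zero hsum))

theorem stmt0 {Ω : Type*} [MeasurableSpace Ω] (μ : Measure Ω) [IsProbabilityMeasure μ]
    (A : ℕ → Set Ω) (hmeas : ∀ n, MeasurableSet (A n))
    (h0 : Tendsto (fun n => μ (A n)) atTop (nhds 0))
    (hsum : ∑' n, μ (A n ∩ (A (n + 1))ᶜ) ≠ ⊤) :
    μ (limsup A atTop) = 0 :=
  stmt0_general μ A h0 hsum
end

section
/- Fix m ≥ 0. If (A_n) is a sequence of events with P(A_n) → 0 and ∑_{n=1}^∞ P(A_n^c ∩ A_{n+1}^c ∩ ... ∩ A_{n+m-1}^c ∩ A_{n+m}) < ∞, then P(limsup A_n) = 0. -/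
open MeasureTheory Filter

theorem stmt1 {Ω : Type*} [MeasurableSpace Ω] (μ : Measure Ω) [IsProbabilityMeasure μ]
    (m : ℕ) (A : ℕ → Set Ω) (hmeas : ∀ n, MeasurableSet (A n))
    (h0 : Tendsto (fun n => μ (A n)) atTop (nhds 0))
    (hsum : ∑' n, μ ((⋂ i ∈ Finset.range m, (A (n + i))ᶜ) ∩ A (n + m)) ≠ ⊤) :
    μ (limsup A atTop) = 0 := by
  set B : ℕ → Set Ω := fun n => (⋂ i ∈ Finset.range m, (A (n + i))ᶜ) ∩ A (n + m) with hB
  have key : ∀ N, limsup A atTop ⊆ (⋃ n, B (n + N)) ∪ ⋃ j ∈ Finset.range m, A (N + j) := by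
    intro N ω hω
    by_cases hb : ∃ n, ω ∈ B (n + N)
    · exact Or.inl (Set.mem_iUnion.mpr hb)
    push_neg at hb
    right
    have claim : ∀ k, N ≤ k → ω ∈ A k → ∃ j ∈ Finset.range m, ω ∈ A (N + j) := by
      intro k
      induction k using Nat.strong_induction_on with
      | _ k ih =>
        intro hNk hAk
        by_cases hk : k < N + m
        · refine ⟨k - N, Finset.mem_range.mpr (by omega), ?_⟩
          rwa [Nat.add_sub_cancel' hNk]
        · push_neg at hk
          have hb' := hb (k - m - N)
          have hidx : k - m - N + N = k - m := by omega
          rw [hidx] at hb'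
          have hAkm : ω ∈ A (k - m + m) := by
            rwa [Nat.sub_add_cancel (by omega)]
          have hnot : ω ∉ ⋂ i ∈ Finset.range m, (A (k - m + i))ᶜ := fun h => hb' ⟨h, hAkm⟩
          simp only [Set.mem_iInter, Set.mem_compl_iff, not_forall, not_not] at hnot
          obtain ⟨i, hi, hAi⟩ := hnot
          have him := Finset.mem_range.mp hi
          exact ih (k - m + i) (by omega) (by omega) hAi
    rw [mem_limsup_iff_frequently_mem] at hω
    obtain ⟨k, hk, hAk⟩ := ((eventually_ge_atTop N).and_frequently hω).exists
    obtain ⟨j, hj, hA⟩ := claim k hk hAk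
    exact Set.mem_biUnion hj hA
  have bound : ∀ N, μ (limsup A atTop) ≤
      (∑' n, μ (B (n + N))) + ∑ j ∈ Finset.range m, μ (A (N + j)) := by
    intro N
    calc μ (limsup A atTop)
        ≤ μ ((⋃ n, B (n + N)) ∪ ⋃ j ∈ Finset.range m, A (N + j)) := measure_mono (key N)
      _ ≤ μ (⋃ n, B (n + N)) + μ (⋃ j ∈ Finset.range m, A (N + j)) := measure_union_le _ _
      _ ≤ _ := add_le_add (measure_iUnion_le _) (measure_biUnion_finset_le _ _)
  have h1 : Tendsto (fun N => ∑' n, μ (B (n + N))) atTop (nhds 0) :=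
    ENNReal.tendsto_sum_nat_add (fun n => μ (B n)) hsum
  have h2 : Tendsto (fun N => ∑ j ∈ Finset.range m, μ (A (N + j))) atTop (nhds 0) := by
    have := tendsto_finset_sum (Finset.range m)
      (fun j _ => h0.comp (tendsto_add_atTop_nat j) : ∀ j ∈ Finset.range m,
        Tendsto (fun N => μ (A (N + j))) atTop (nhds 0))
    simpa using this
  have h3 : Tendsto (fun N => (∑' n, μ (B (n + N))) + ∑ j ∈ Finset.range m, μ (A (N + j)))
      atTop (nhds 0) := by
    have := h1.add h2
    simpa using this
  exact le_zero_iff.mp (ge_of_tendsto' h3 bound)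
end

section
/- If (A_n) is a Markov sequence of events with P(A_n) → 0, P(A_n) ≠ 1 for all n ≥ N, and ∑_{n=N}^∞ P(A_{n+1} | A_n^c) < ∞, then P(limsup A_n) = 0. -/
/-
For `n ≥ N`, an outcome in `limsup A` lies either in `A n` or in a first entrance
`A (m + 1) ∩ A nᶜ ∩ ⋯ ∩ A mᶜ` for some `m ≥ n`. By the Markov property the probability of such a
first entrance is `P(A (m + 1) | A mᶜ) · P(A nᶜ ∩ ⋯ ∩ A mᶜ) ≤ P(A (m + 1) | A mᶜ)`, so
`P(limsup A) ≤ P(A n) + ∑_{m ≥ n} P(A (m + 1) | A mᶜ)`, and both terms tend to `0` as `n → ∞`.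
-/

open MeasureTheory Filter

/-- `A` is a Markov sequence of events: the indicators `1_{A n}` form a Markov chain.
Elementary formulation: conditionally on any cylinder event determined by
`A 0, …, A n` (each taken either as itself or its complement), the conditional
probability of `A (n+1)` depends only on the last coordinate. -/
def IsMarkovSeq {Ω : Type*} [MeasurableSpace Ω] (μ : Measure Ω) (A : ℕ → Set Ω) : Prop :=
  ∀ n : ℕ, ∀ B : ℕ → Set Ω, (∀ i, i ≤ n → B i = A i ∨ B i = (A i)ᶜ) →
    μ (⋂ i ∈ Finset.range (n + 1), B i) ≠ 0 →
    μ (A (n + 1) ∩ ⋂ i ∈ Finset.range (n + 1), B i) * μ (B n)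
      = μ (A (n + 1) ∩ B n) * μ (⋂ i ∈ Finset.range (n + 1), B i)

open Set

theorem iUnion_add_subset_union_iUnion_inter_iInter_compl {Ω : Type*} (A : ℕ → Set Ω) (n : ℕ) :
    ⋃ k, A (n + k) ⊆ A n ∪ ⋃ k, (A (n + k + 1) ∩ ⋂ i ∈ Finset.Ico n (n + k + 1), (A i)ᶜ) := by
  classical
  intro x hx
  have hex : ∃ k, x ∈ A (n + k) := mem_iUnion.1 hx
  rcases hfind : Nat.find hex with _ | k
  · exact .inl (by simpa [hfind] using Nat.find_spec hex)
  · refine .inr (mem_iUnion.2 ⟨k, by simpa [hfind, add_assoc] using Nat.find_spec hex, ?_⟩)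
    simp only [mem_iInter₂, Finset.mem_Ico, mem_compl_iff]
    intro i hi hxi
    have := Nat.find_min' hex (m := i - n) (by rwa [Nat.add_sub_cancel' hi.1])
    omega

namespace IsMarkovSeq

variable {Ω : Type*} [MeasurableSpace Ω] {μ : Measure Ω} {A : ℕ → Set Ω}

/- The Markov property is stated for cylinders fixing all of `A 0, …, A m`; leaving the
first `k` coordinates free amounts to summing it over the two choices for each of them. -/
theorem measure_inter_iInter_Ico_mul (hMarkov : IsMarkovSeq μ A)
    (hmeas : ∀ n, MeasurableSet (A n)) {k m : ℕ} (hkm : k ≤ m) (B : ℕ → Set Ω)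
    (hB : ∀ i, B i = A i ∨ B i = (A i)ᶜ) :
    μ (A (m + 1) ∩ ⋂ i ∈ Finset.Ico k (m + 1), B i) * μ (B m)
      = μ (A (m + 1) ∩ B m) * μ (⋂ i ∈ Finset.Ico k (m + 1), B i) := by
  induction k generalizing B with
  | zero =>
    rw [← Finset.range_eq_Ico]
    by_cases hC : μ (⋂ i ∈ Finset.range (m + 1), B i) = 0
    · rw [hC, measure_mono_null inter_subset_right hC, zero_mul, mul_zero]
    · exact hMarkov m B (fun i _ ↦ hB i) hC
  | succ k ih =>
    set C := ⋂ i ∈ Finset.Ico (k + 1) (m + 1), B i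
    have hcyl : ∀ S, (⋂ i ∈ Finset.Ico k (m + 1), Function.update B k S i) = S ∩ C := by
      intro S
      rw [← Finset.insert_Ico_add_one_left_eq_Ico (by omega), Finset.set_biInter_insert,
        Function.update_self]
      congr 1
      refine iInter₂_congr fun i hi ↦ Function.update_of_ne ?_ _ _
      exact Nat.ne_of_gt (Finset.mem_Ico.1 hi).1
    have hupd : ∀ S, S = A k ∨ S = (A k)ᶜ → ∀ i, Function.update B k S i = A i ∨
        Function.update B k S i = (A i)ᶜ := by
      intro S hS i
      rcases eq_or_ne i k with rfl | hik
      · simpa using hS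
      · simpa [Function.update_of_ne hik] using hB i
    have hin := ih (by omega) _ (hupd _ (.inl rfl))
    have hout := ih (by omega) _ (hupd _ (.inr rfl))
    rw [hcyl, Function.update_of_ne (by omega)] at hin hout
    have hsplit : ∀ X, μ (X ∩ C) = μ (X ∩ (A k ∩ C)) + μ (X ∩ ((A k)ᶜ ∩ C)) := by
      intro X
      rw [← measure_inter_add_sdiff (X ∩ C) (hmeas k), sdiff_eq]
      congr 2 <;> ac_rfl
    have hsplitC := hsplit univ
    simp only [univ_inter] at hsplitC
    rw [hsplit, hsplitC, add_mul, mul_add, hin, hout]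

theorem measure_inter_iInter_compl_le (hMarkov : IsMarkovSeq μ A) [IsProbabilityMeasure μ]
    (hmeas : ∀ n, MeasurableSet (A n)) {n m : ℕ} (hnm : n ≤ m) (hm : μ (A m)ᶜ ≠ 0) :
    μ (A (m + 1) ∩ ⋂ i ∈ Finset.Ico n (m + 1), (A i)ᶜ)
      ≤ μ (A (m + 1) ∩ (A m)ᶜ) / μ (A m)ᶜ := by
  rw [ENNReal.le_div_iff_mul_le (.inl hm) (.inl (measure_ne_top μ _)),
    hMarkov.measure_inter_iInter_Ico_mul hmeas hnm (fun i ↦ (A i)ᶜ) fun i ↦ .inr rfl]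
  exact mul_le_of_le_one_right' prob_le_one

theorem measure_limsup_le (hMarkov : IsMarkovSeq μ A) [IsProbabilityMeasure μ]
    (hmeas : ∀ n, MeasurableSet (A n)) {n : ℕ} (hn : ∀ m, n ≤ m → μ (A m)ᶜ ≠ 0) :
    μ (limsup A atTop)
      ≤ μ (A n) + ∑' k, μ (A (n + k + 1) ∩ (A (n + k))ᶜ) / μ (A (n + k))ᶜ := by
  have hlimsup : limsup A atTop ⊆ ⋃ k, A (n + k) := by
    rw [limsup_eq_iInf_iSup_of_nat']
    refine (iInf_le _ n).trans fun x hx ↦ ?_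
    obtain ⟨k, hk⟩ := mem_iUnion.1 hx
    exact mem_iUnion.2 ⟨k, by rwa [add_comm]⟩
  calc μ (limsup A atTop)
      ≤ μ (A n ∪ ⋃ k, (A (n + k + 1) ∩ ⋂ i ∈ Finset.Ico n (n + k + 1), (A i)ᶜ)) :=
        measure_mono (hlimsup.trans (iUnion_add_subset_union_iUnion_inter_iInter_compl A n))
    _ ≤ μ (A n) + ∑' k, μ (A (n + k + 1) ∩ ⋂ i ∈ Finset.Ico n (n + k + 1), (A i)ᶜ) :=
        (measure_union_le _ _).trans (add_le_add_right (measure_iUnion_le _) _)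
    _ ≤ _ := by
        gcongr with k
        exact hMarkov.measure_inter_iInter_compl_le hmeas (Nat.le_add_right n k)
          (hn _ (Nat.le_add_right n k))

end IsMarkovSeq

theorem stmt2 {Ω : Type*} [MeasurableSpace Ω] (μ : Measure Ω) [IsProbabilityMeasure μ]
    (A : ℕ → Set Ω) (hmeas : ∀ n, MeasurableSet (A n))
    (hMarkov : IsMarkovSeq μ A)
    (h0 : Tendsto (fun n => μ (A n)) atTop (nhds 0))
    (N : ℕ) (hN : ∀ n, N ≤ n → μ (A n) ≠ 1)
    (hsum : ∑' n : ℕ, μ (A (N + n + 1) ∩ (A (N + n))ᶜ) / μ ((A (N + n))ᶜ) ≠ ⊤) :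
    μ (limsup A atTop) = 0 := by
  have hbound (t : ℕ) := hMarkov.measure_limsup_le hmeas (n := N + t) fun m hm ↦
    (prob_compl_eq_zero_iff (hmeas m)).not.2 (hN m (by omega))
  have hA : Tendsto (fun t ↦ μ (A (N + t))) atTop (nhds 0) :=
    h0.comp (tendsto_atTop_mono (Nat.le_add_left · N) tendsto_id)
  have htail := ENNReal.tendsto_sum_nat_add _ hsum
  refine le_antisymm (ge_of_tendsto' (by simpa using hA.add htail) fun t ↦ ?_) zero_le
  simpa only [add_assoc, add_comm t] using hbound t
end

section
/- If (A_n) is a Markov sequence of events with P(A_n) → 0, P(A_n) ≠ 1 for all n ≥ N, and ∑_{n=N}^∞ P(A_{n+1} | A_n^c) = ∞, then P(limsup A_n) = 1. -/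
open MeasureTheory Filter

open scoped ENNReal

/-!
Write `E m n` for the event that none of `A m, …, A (n - 1)` occurs and `p n = P(A (n+1) | (A n)ᶜ)`.
The Markov property, extended from full cylinders to cylinders on `[m, n]` by additivity, gives
`P(A (n+1) ∩ E m (n+1)) = p n · P(E m (n+1))`, hence `P(E m (n+2)) (1 + p n) ≤ P(E m (n+1))`.
Iterating with `1 + a + b ≤ (1 + a)(1 + b)` gives `P(⋂ i ≥ m, (A i)ᶜ) (1 + ∑_{j<k} p (m+j)) ≤ 1`
for every `k`; this is the usual bound `∏ (1 - p j) ≤ exp (-∑ p j)` without subtraction in `ℝ≥0∞`.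
Divergence of `∑ p` makes each `⋂ i ≥ m, (A i)ᶜ` null, and their union is `(limsup A)ᶜ`.
-/

lemma ENNReal.eq_zero_of_forall_mul_sum_range_le {a c : ℝ≥0∞} {f : ℕ → ℝ≥0∞}
    (hf : ∑' n, f n = ⊤) (hc : c ≠ ⊤) (h : ∀ k, a * ∑ j ∈ Finset.range k, f j ≤ c) : a = 0 := by
  by_contra ha
  have hle : a * ∑' n, f n ≤ c := by
    rw [ENNReal.tsum_eq_iSup_nat, ENNReal.mul_iSup]
    exact iSup_le h
  rw [hf, ENNReal.mul_top ha] at hle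
  exact hc (top_le_iff.mp hle)

lemma ENNReal.tsum_nat_add_eq_top {f : ℕ → ℝ≥0∞} (hf : ∑' n, f n = ⊤) (hfin : ∀ n, f n ≠ ⊤)
    (k : ℕ) : ∑' n, f (n + k) = ⊤ := by
  induction k with
  | zero => exact hf
  | succ k ih =>
    simpa only [add_assoc, add_comm 1 k] using
      ENNReal.tsum_add_one_eq_top ih (by simpa using hfin k)

lemma measure_inter_mul_eq_of_inter_of_diff {Ω : Type*} [MeasurableSpace Ω] {μ : Measure Ω}
    {s t u : Set Ω} (ht : MeasurableSet t) {a b : ℝ≥0∞}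
    (h_in : μ (s ∩ (u ∩ t)) * a = b * μ (u ∩ t)) (h_out : μ (s ∩ (u \ t)) * a = b * μ (u \ t)) :
    μ (s ∩ u) * a = b * μ u := by
  rw [← measure_inter_add_sdiff u ht, ← measure_inter_add_sdiff (s ∩ u) ht, Set.inter_assoc,
    Set.inter_sdiff_assoc, add_mul, mul_add, h_in, h_out]

section

variable {Ω : Type*} [MeasurableSpace Ω]

/-- `P(A (n+1) | (A n)ᶜ)`; through `x / 0 = 0` it is `0` when `(A n)ᶜ` is null. -/
noncomputable def entryProb (μ : Measure Ω) (A : ℕ → Set Ω) (n : ℕ) : ℝ≥0∞ :=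
  μ (A (n + 1) ∩ (A n)ᶜ) / μ ((A n)ᶜ)

lemma entryProb_le_one (μ : Measure Ω) (A : ℕ → Set Ω) (n : ℕ) : entryProb μ A n ≤ 1 :=
  ENNReal.div_le_of_le_mul (by rw [one_mul]; exact measure_mono Set.inter_subset_right)

end

namespace IsMarkovSeq

variable {Ω : Type*} [MeasurableSpace Ω] {μ : Measure Ω} {A : ℕ → Set Ω}

lemma measure_inter_biInter_Ico_mul (hMarkov : IsMarkovSeq μ A) (hA : ∀ n, MeasurableSet (A n))
    {n k : ℕ} (hk : k ≤ n) {B : ℕ → Set Ω} (hB : ∀ i ≤ n, B i = A i ∨ B i = (A i)ᶜ) :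
    μ (A (n + 1) ∩ ⋂ i ∈ Finset.Ico k (n + 1), B i) * μ (B n)
      = μ (A (n + 1) ∩ B n) * μ (⋂ i ∈ Finset.Ico k (n + 1), B i) := by
  classical
  induction k generalizing B with
  | zero =>
    rw [← Finset.range_eq_Ico]
    by_cases h0 : μ (⋂ i ∈ Finset.range (n + 1), B i) = 0
    · rw [h0, measure_mono_null Set.inter_subset_right h0, zero_mul, mul_zero]
    · exact hMarkov n B hB h0
  | succ k ih =>
    -- a cylinder on `[k + 1, n]` is the disjoint union of its two extensions to `[k, n]`
    have hkn : k < n := hk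
    have hsplit (E : Set Ω) (hE : E = A k ∨ E = (A k)ᶜ) :
        μ (A (n + 1) ∩ ((⋂ i ∈ Finset.Ico (k + 1) (n + 1), B i) ∩ E)) * μ (B n)
          = μ (A (n + 1) ∩ B n) * μ ((⋂ i ∈ Finset.Ico (k + 1) (n + 1), B i) ∩ E) := by
      have hBE : ∀ i ≤ n, Function.update B k E i = A i ∨ Function.update B k E i = (A i)ᶜ := by
        intro i hi
        rcases eq_or_ne i k with rfl | hik
        · simpa using hE
        · simpa [hik] using hB i hi
      have hI : ⋂ i ∈ Finset.Ico k (n + 1), Function.update B k E i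
          = (⋂ i ∈ Finset.Ico (k + 1) (n + 1), B i) ∩ E := by
        rw [← Finset.insert_Ico_add_one_left_eq_Ico (by omega), Finset.set_biInter_insert,
          Set.inter_comm, Function.update_self]
        congr 1
        refine Set.iInter₂_congr fun i hi => ?_
        rw [Function.update_of_ne (Nat.lt_of_succ_le (Finset.mem_Ico.1 hi).1).ne']
      have := ih hkn.le hBE
      rwa [hI, Function.update_of_ne hkn.ne'] at this
    refine measure_inter_mul_eq_of_inter_of_diff (hA k) (hsplit _ (Or.inl rfl)) ?_
    rw [Set.sdiff_eq]
    exact hsplit _ (Or.inr rfl)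

lemma measure_inter_biInter_compl (hMarkov : IsMarkovSeq μ A) (hA : ∀ n, MeasurableSet (A n))
    [IsFiniteMeasure μ] {m n : ℕ} (hmn : m ≤ n) (hn : μ ((A n)ᶜ) ≠ 0) :
    μ (A (n + 1) ∩ ⋂ i ∈ Finset.Ico m (n + 1), (A i)ᶜ)
      = entryProb μ A n * μ (⋂ i ∈ Finset.Ico m (n + 1), (A i)ᶜ) := by
  have h := hMarkov.measure_inter_biInter_Ico_mul hA hmn (B := fun i => (A i)ᶜ)
    fun i _ => Or.inr rfl
  rw [entryProb, ← ENNReal.mul_div_right_comm, ← h,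
    ENNReal.mul_div_cancel_right hn (measure_ne_top _ _)]

lemma measure_biInter_compl_succ_mul_le (hMarkov : IsMarkovSeq μ A)
    (hA : ∀ n, MeasurableSet (A n)) [IsFiniteMeasure μ] {m n : ℕ} (hmn : m ≤ n)
    (hn : μ ((A n)ᶜ) ≠ 0) :
    μ (⋂ i ∈ Finset.Ico m (n + 2), (A i)ᶜ) * (1 + entryProb μ A n)
      ≤ μ (⋂ i ∈ Finset.Ico m (n + 1), (A i)ᶜ) := by
  set E := ⋂ i ∈ Finset.Ico m (n + 1), (A i)ᶜ
  have hsucc : ⋂ i ∈ Finset.Ico m (n + 1 + 1), (A i)ᶜ = E \ A (n + 1) := by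
    rw [← Finset.insert_Ico_right_eq_Ico_add_one (by omega), Finset.set_biInter_insert,
      Set.inter_comm, Set.sdiff_eq]
  rw [hsucc]
  calc μ (E \ A (n + 1)) * (1 + entryProb μ A n)
      ≤ μ (E \ A (n + 1)) + entryProb μ A n * μ E := by
        rw [mul_add, mul_one, mul_comm]
        gcongr
        exact Set.sdiff_subset
    _ = μ E := by
        rw [← hMarkov.measure_inter_biInter_compl hA hmn hn, add_comm, Set.inter_comm,
          measure_inter_add_sdiff E (hA _)]

lemma measure_biInter_compl_mul_one_add_sum_le_one (hMarkov : IsMarkovSeq μ A)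
    (hA : ∀ n, MeasurableSet (A n)) [IsProbabilityMeasure μ] {m : ℕ}
    (hpos : ∀ n, m ≤ n → μ ((A n)ᶜ) ≠ 0) (k : ℕ) :
    μ (⋂ i ∈ Finset.Ico m (m + k + 1), (A i)ᶜ)
        * (1 + ∑ j ∈ Finset.range k, entryProb μ A (m + j)) ≤ 1 := by
  induction k with
  | zero => simpa using prob_le_one
  | succ k ih =>
    set S := ∑ j ∈ Finset.range k, entryProb μ A (m + j)
    set p := entryProb μ A (m + k)
    rw [Finset.sum_range_succ, show m + (k + 1) + 1 = m + k + 2 by ring]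
    calc μ (⋂ i ∈ Finset.Ico m (m + k + 2), (A i)ᶜ) * (1 + (S + p))
        ≤ μ (⋂ i ∈ Finset.Ico m (m + k + 2), (A i)ᶜ) * (1 + p) * (1 + S) := by
          rw [mul_assoc]
          gcongr
          calc 1 + (S + p) ≤ 1 + (S + p) + p * S := le_self_add
            _ = (1 + p) * (1 + S) := by ring
      _ ≤ μ (⋂ i ∈ Finset.Ico m (m + k + 1), (A i)ᶜ) * (1 + S) := by
          gcongr
          exact hMarkov.measure_biInter_compl_succ_mul_le hA (by omega) (hpos _ (by omega))
      _ ≤ 1 := ih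

lemma measure_biInter_compl_eq_zero (hMarkov : IsMarkovSeq μ A) (hA : ∀ n, MeasurableSet (A n))
    [IsProbabilityMeasure μ] {m : ℕ} (hpos : ∀ n, m ≤ n → μ ((A n)ᶜ) ≠ 0)
    (hsum : ∑' j, entryProb μ A (m + j) = ⊤) :
    μ (⋂ i ≥ m, (A i)ᶜ) = 0 := by
  refine ENNReal.eq_zero_of_forall_mul_sum_range_le hsum ENNReal.one_ne_top fun k => ?_
  calc μ (⋂ i ≥ m, (A i)ᶜ) * ∑ j ∈ Finset.range k, entryProb μ A (m + j)
      ≤ μ (⋂ i ∈ Finset.Ico m (m + k + 1), (A i)ᶜ)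
          * (1 + ∑ j ∈ Finset.range k, entryProb μ A (m + j)) := by
        refine mul_le_mul' (measure_mono ?_) le_add_self
        exact Set.iInter₂_mono' fun i hi => ⟨i, (Finset.mem_Ico.1 hi).1, le_rfl⟩
    _ ≤ 1 := hMarkov.measure_biInter_compl_mul_one_add_sum_le_one hA hpos k

end IsMarkovSeq

theorem stmt3_general {Ω : Type*} [MeasurableSpace Ω] (μ : Measure Ω) [IsProbabilityMeasure μ]
    (A : ℕ → Set Ω) (hmeas : ∀ n, MeasurableSet (A n))
    (hMarkov : IsMarkovSeq μ A)
    (N : ℕ) (hN : ∀ n, N ≤ n → μ (A n) ≠ 1)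
    (hsum : ∑' n : ℕ, μ (A (N + n + 1) ∩ (A (N + n))ᶜ) / μ ((A (N + n))ᶜ) = ⊤) :
    μ (limsup A atTop) = 1 := by
  have hpos (n : ℕ) (hn : N ≤ n) : μ ((A n)ᶜ) ≠ 0 := by
    rw [Ne, prob_compl_eq_zero_iff (hmeas n)]
    exact hN n hn
  have htail (n : ℕ) : μ (⋂ i ≥ N + n, (A i)ᶜ) = 0 := by
    refine hMarkov.measure_biInter_compl_eq_zero hmeas (fun j hj => hpos j (by omega)) ?_
    have := ENNReal.tsum_nat_add_eq_top (f := fun j => entryProb μ A (N + j)) hsum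
      (fun j => ne_top_of_le_ne_top ENNReal.one_ne_top (entryProb_le_one μ A (N + j))) n
    simpa only [add_assoc, add_comm n] using this
  rw [← prob_compl_eq_zero_iff (MeasurableSet.measurableSet_limsup hmeas), limsup_compl,
    liminf_eq_iSup_iInf_of_nat]
  refine measure_iUnion_null fun n => measure_mono_null ?_ (htail n)
  exact Set.iInter₂_mono' fun i hi => ⟨i, le_trans (Nat.le_add_left n N) hi, le_rfl⟩

theorem stmt3 {Ω : Type*} [MeasurableSpace Ω] (μ : Measure Ω) [IsProbabilityMeasure μ]
    (A : ℕ → Set Ω) (hmeas : ∀ n, MeasurableSet (A n))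
    (hMarkov : IsMarkovSeq μ A)
    (h0 : Tendsto (fun n => μ (A n)) atTop (nhds 0))
    (N : ℕ) (hN : ∀ n, N ≤ n → μ (A n) ≠ 1)
    (hsum : ∑' n : ℕ, μ (A (N + n + 1) ∩ (A (N + n))ᶜ) / μ ((A (N + n))ᶜ) = ⊤) :
    μ (limsup A atTop) = 1 :=
  stmt3_general μ A hmeas hMarkov N hN hsum
end

section
/- If (A_n) is a Markov sequence of events with P(A_n) → 0, then P(limsup A_n) = 0 if ∑_{n=1}^∞ P(A_n^c ∩ A_{n+1}) < ∞, and P(limsup A_n) = 1 if ∑_{n=1}^∞ P(A_n^c ∩ A_{n+1}) = ∞. -/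
/-!
If only finitely many transitions `Aₙᶜ → Aₙ₊₁` occur, then `ω ∈ Aₙ` for infinitely many `n` forces
`ω` to lie in all `Aₙ` from some point on; this happens only on a null set since `P(Aₙ) → 0`, and
Borel–Cantelli disposes of the transitions when `∑ P(Aₙᶜ ∩ Aₙ₊₁) < ∞`.

Conversely, the Markov property lets one condition the event `Aₘᶜ ∩ ⋯ ∩ A_Nᶜ` on `A_Nᶜ` alone, so
`P(Aₘᶜ ∩ ⋯ ∩ A_{N+1}ᶜ) ≤ (1 - P(A_Nᶜ ∩ A_{N+1})) P(Aₘᶜ ∩ ⋯ ∩ A_Nᶜ)`, and the product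
`∏ (1 - cₙ) ≤ exp (-∑ cₙ)` vanishes when `∑ cₙ = ∞`. Hence `⋂_{n ≥ m} Aₙᶜ` is null for every `m`.
-/

open MeasureTheory Filter

open Set
open scoped ENNReal Topology

theorem Real.tendsto_zero_of_le_one_sub_mul {p c : ℕ → ℝ} (hp : ∀ k, 0 ≤ p k)
    (hc : ∀ k, 0 ≤ c k) (hc_sum : ¬ Summable c) (hstep : ∀ k, p (k + 1) ≤ (1 - c k) * p k) :
    Tendsto p atTop (𝓝 0) := by
  have hbound : ∀ k, p k ≤ p 0 * Real.exp (-∑ j ∈ Finset.range k, c j) := by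
    intro k
    induction k with
    | zero => simp
    | succ k ih =>
      calc p (k + 1) ≤ (1 - c k) * p k := hstep k
        _ ≤ Real.exp (-c k) * (p 0 * Real.exp (-∑ j ∈ Finset.range k, c j)) :=
          mul_le_mul (Real.one_sub_le_exp_neg _) ih (hp k) (Real.exp_nonneg _)
        _ = p 0 * Real.exp (-∑ j ∈ Finset.range (k + 1), c j) := by
          rw [Finset.sum_range_succ, neg_add, Real.exp_add]; ring
  have hexp : Tendsto (fun k => p 0 * Real.exp (-∑ j ∈ Finset.range k, c j)) atTop (𝓝 0) := by
    simpa using ((Real.tendsto_exp_atBot.comp (tendsto_neg_atTop_atBot.comp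
      ((not_summable_iff_tendsto_nat_atTop_of_nonneg hc).1 hc_sum))).const_mul (p 0))
  exact tendsto_of_tendsto_of_tendsto_of_le_of_le tendsto_const_nhds hexp hp hbound

theorem Set.limsup_subset_limsup_compl_inter_succ_union_liminf {α : Type*} (A : ℕ → Set α) :
    limsup A atTop ⊆ limsup (fun n => (A n)ᶜ ∩ A (n + 1)) atTop ∪ liminf A atTop := by
  intro ω hω
  rw [mem_union, or_iff_not_imp_left, mem_limsup_iff_frequently_mem, not_frequently,
    eventually_atTop]
  rintro ⟨M, hM⟩
  rw [mem_liminf_iff_eventually_mem, eventually_atTop]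
  refine ⟨M, fun n hn => ?_⟩
  obtain ⟨k, hkn, hk⟩ := frequently_atTop.1 (mem_limsup_iff_frequently_mem.1 hω) n
  induction k, hkn using Nat.le_induction with
  | base => exact hk
  | succ k hnk ih => exact ih (by_contra fun hk' => hM k (hn.trans hnk) ⟨hk', hk⟩)

theorem MeasureTheory.measure_liminf_eq_zero_of_tendsto {α : Type*} [MeasurableSpace α]
    {μ : Measure α} {A : ℕ → Set α} (h0 : Tendsto (fun n => μ (A n)) atTop (𝓝 0)) :
    μ (liminf A atTop) = 0 := by
  rw [liminf_eq_iSup_iInf_of_nat]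
  refine measure_iUnion_null fun m => le_antisymm ?_ zero_le
  refine ge_of_tendsto h0 ?_
  filter_upwards [eventually_ge_atTop m] with n hn
  exact measure_mono (iInter₂_subset n hn)

theorem MeasureTheory.Measure.univ_eq_of_forall_cylinder {Ω : Type*} [MeasurableSpace Ω]
    {ν₁ ν₂ : Measure Ω} {A : ℕ → Set Ω} (hA : ∀ i, MeasurableSet (A i)) (n : ℕ)
    (h : ∀ B : ℕ → Set Ω, (∀ i < n, B i = A i ∨ B i = (A i)ᶜ) →
      ν₁ (⋂ i ∈ Finset.range n, B i) = ν₂ (⋂ i ∈ Finset.range n, B i)) :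
    ν₁ univ = ν₂ univ := by
  induction n with
  | zero => simpa using h (fun _ => univ) (by simp)
  | succ n ih =>
    refine ih fun B hB => ?_
    have hcyl : ∀ S, (⋂ i ∈ Finset.range n, B i) ∩ S
        = ⋂ i ∈ Finset.range (n + 1), Function.update B n S i := by
      intro S
      rw [Finset.range_add_one, Finset.set_biInter_insert, Function.update_self, inter_comm]
      congr 1
      refine iInter₂_congr fun i hi => ?_
      rw [Function.update_of_ne (Finset.mem_range.1 hi).ne]
    have hupdate : ∀ S, (S = A n ∨ S = (A n)ᶜ) →
        ∀ i < n + 1, Function.update B n S i = A i ∨ Function.update B n S i = (A i)ᶜ := by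
      intro S hS i hi
      rcases (Nat.lt_succ_iff.1 hi).lt_or_eq with hi | rfl
      · rw [Function.update_of_ne hi.ne]; exact hB i hi
      · rwa [Function.update_self]
    have hsplit : ∀ ν : Measure Ω, ν (⋂ i ∈ Finset.range n, B i)
        = ν ((⋂ i ∈ Finset.range n, B i) ∩ A n) + ν ((⋂ i ∈ Finset.range n, B i) ∩ (A n)ᶜ) :=
      fun ν => by rw [← sdiff_eq, measure_inter_add_sdiff _ (hA n)]
    rw [hsplit ν₁, hsplit ν₂, hcyl, hcyl, h _ (hupdate _ (Or.inl rfl)),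
      h _ (hupdate _ (Or.inr rfl))]

namespace IsMarkovSeq

variable {Ω : Type*} [MeasurableSpace Ω] {μ : Measure Ω} {A : ℕ → Set Ω}

theorem measure_inter_biInter_Icc_mul (hM : IsMarkovSeq μ A) (hA : ∀ i, MeasurableSet (A i))
    {m N : ℕ} (hmN : m ≤ N) {B : ℕ → Set Ω} (hB : ∀ i, B i = A i ∨ B i = (A i)ᶜ) :
    μ (A (N + 1) ∩ ⋂ i ∈ Finset.Icc m N, B i) * μ (B N)
      = μ (A (N + 1) ∩ B N) * μ (⋂ i ∈ Finset.Icc m N, B i) := by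
  set D := ⋂ i ∈ Finset.Icc m N, B i
  have hBmeas : ∀ i, MeasurableSet (B i) := fun i => by
    rcases hB i with h | h <;> rw [h]
    exacts [hA i, (hA i).compl]
  have hD : MeasurableSet D := Finset.measurableSet_biInter _ fun i _ => hBmeas i
  -- As measures of an event `C` of the remote past `A 0, …, A (m - 1)`, both sides agree on the
  -- atoms `C` by the Markov property at time `N`, hence on `univ`.
  have key := Measure.univ_eq_of_forall_cylinder (ν₁ := μ (B N) • μ.restrict (A (N + 1) ∩ D))
    (ν₂ := μ (A (N + 1) ∩ B N) • μ.restrict D) hA m fun C hC => ?_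
  · simpa [mul_comm] using key
  set C' := ⋂ i ∈ Finset.range m, C i
  let B' : ℕ → Set Ω := fun i => if i < m then C i else B i
  have hB' : ∀ i ≤ N, B' i = A i ∨ B' i = (A i)ᶜ := fun i _ => by
    by_cases hi : i < m
    · simpa [B', hi] using hC i hi
    · simpa [B', hi] using hB i
  have hcyl : ⋂ i ∈ Finset.range (N + 1), B' i = C' ∩ D := by
    ext ω
    simp only [C', D, B', mem_inter_iff, mem_iInter, Finset.mem_range, Finset.mem_Icc]
    constructor
    · intro h
      exact ⟨fun i hi => by simpa [hi] using h i (by omega),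
        fun i hi => by simpa [show ¬ i < m by omega] using h i (by omega)⟩
    · rintro ⟨h₁, h₂⟩ i hi
      split_ifs with him
      exacts [h₁ i him, h₂ i ⟨not_lt.1 him, Nat.lt_succ_iff.1 hi⟩]
  have hBN : B' N = B N := if_neg (not_lt.2 hmN)
  simp only [Measure.smul_apply, smul_eq_mul, Measure.restrict_apply' hD,
    Measure.restrict_apply' ((hA _).inter hD)]
  by_cases h0 : μ (C' ∩ D) = 0
  · rw [h0, measure_mono_null (inter_subset_inter_right C' inter_subset_right) h0, mul_zero,
      mul_zero]
  · have hmarkov := hM N B' hB' (hcyl ▸ h0)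
    rw [hcyl, hBN] at hmarkov
    rw [← inter_assoc, inter_comm C', inter_assoc, mul_comm, hmarkov]

theorem measureReal_biInter_Icc_succ_le [IsProbabilityMeasure μ] (hM : IsMarkovSeq μ A)
    (hA : ∀ i, MeasurableSet (A i)) {m N : ℕ} (hmN : m ≤ N) :
    μ.real (⋂ i ∈ Finset.Icc m (N + 1), (A i)ᶜ)
      ≤ (1 - μ.real ((A N)ᶜ ∩ A (N + 1))) * μ.real (⋂ i ∈ Finset.Icc m N, (A i)ᶜ) := by
  set D := ⋂ i ∈ Finset.Icc m N, (A i)ᶜ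
  have hD : ⋂ i ∈ Finset.Icc m (N + 1), (A i)ᶜ = D \ A (N + 1) := by
    rw [← Finset.insert_Icc_right_eq_Icc_add_one (by omega), Finset.set_biInter_insert,
      inter_comm, sdiff_eq]
  have key := congrArg ENNReal.toReal
    (hM.measure_inter_biInter_Icc_mul hA hmN (B := fun i => (A i)ᶜ) fun i => Or.inr rfl)
  simp only [ENNReal.toReal_mul, ← measureReal_def] at key
  have hsplit := measureReal_sdiff_add_inter (μ := μ) (s := D) (hA (N + 1))
  have hle : μ.real ((A N)ᶜ ∩ A (N + 1)) * μ.real D ≤ μ.real (D ∩ A (N + 1)) :=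
    calc μ.real ((A N)ᶜ ∩ A (N + 1)) * μ.real D
        = μ.real (A (N + 1) ∩ D) * μ.real (A N)ᶜ := by rw [key, inter_comm]
      _ ≤ μ.real (D ∩ A (N + 1)) := by
        rw [inter_comm]
        exact mul_le_of_le_one_right measureReal_nonneg measureReal_le_one
  rw [hD]
  linarith

theorem measure_iInter_compl_eq_zero [IsProbabilityMeasure μ] (hM : IsMarkovSeq μ A)
    (hA : ∀ i, MeasurableSet (A i)) (hdiv : ∑' n, μ ((A n)ᶜ ∩ A (n + 1)) = ⊤) (m : ℕ) :
    μ (⋂ i ≥ m, (A i)ᶜ) = 0 := by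
  have hc : ¬ Summable fun k => μ.real ((A (k + m))ᶜ ∩ A (k + m + 1)) := by
    rw [summable_nat_add_iff (f := fun n => μ.real ((A n)ᶜ ∩ A (n + 1)))]
    intro hsum
    have hofReal : ENNReal.ofReal (∑' n, μ.real ((A n)ᶜ ∩ A (n + 1))) = ⊤ := by
      rw [ENNReal.ofReal_tsum_of_nonneg (fun _ => measureReal_nonneg) hsum]
      simpa only [fun n => ofReal_measureReal (μ := μ) (s := (A n)ᶜ ∩ A (n + 1))] using hdiv
    exact ENNReal.ofReal_ne_top hofReal
  have hlim := Real.tendsto_zero_of_le_one_sub_mul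
    (p := fun k => μ.real (⋂ i ∈ Finset.Icc m (k + m), (A i)ᶜ))
    (fun _ => measureReal_nonneg) (fun _ => measureReal_nonneg) hc fun k => by
      simpa [add_right_comm] using hM.measureReal_biInter_Icc_succ_le hA (Nat.le_add_left m k)
  rw [← ofReal_measureReal, ENNReal.ofReal_eq_zero]
  refine ge_of_tendsto' hlim fun k => measureReal_mono fun ω hω => ?_
  simp only [mem_iInter, Finset.mem_Icc] at hω ⊢
  exact fun i hi => hω i hi.1

end IsMarkovSeq

theorem stmt4 {Ω : Type*} [MeasurableSpace Ω] (μ : Measure Ω) [IsProbabilityMeasure μ]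
    (A : ℕ → Set Ω) (hmeas : ∀ n, MeasurableSet (A n))
    (hMarkov : IsMarkovSeq μ A)
    (h0 : Tendsto (fun n => μ (A n)) atTop (nhds 0)) :
    (∑' n, μ ((A n)ᶜ ∩ A (n + 1)) ≠ ⊤ → μ (limsup A atTop) = 0) ∧
    (∑' n, μ ((A n)ᶜ ∩ A (n + 1)) = ⊤ → μ (limsup A atTop) = 1) := by
  constructor
  · intro hsum
    exact measure_mono_null (limsup_subset_limsup_compl_inter_succ_union_liminf A)
      (measure_union_null (measure_limsup_atTop_eq_zero hsum)
        (measure_liminf_eq_zero_of_tendsto h0))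
  · intro hdiv
    rw [← prob_compl_eq_zero_iff (MeasurableSet.measurableSet_limsup hmeas), limsup_compl,
      liminf_eq_iSup_iInf_of_nat]
    exact measure_iUnion_null (hMarkov.measure_iInter_compl_eq_zero hmeas hdiv)
end

section
/- With (X_i,Y_i) i.i.d. with continuous joint distribution F, marginals H and G, and Y_{[n,n]} the concomitant of the maximum of X_1,...,X_n: for fixed y, P(Y_{[n,n]} > y, Y_{[n+1,n+1]} ≤ y) = n ∫_ℝ H(x)^{n-1} (G(y) − F(x,y)) [dH(x) − F(dx, y)]. -/
open MeasureTheory Filter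

/-- Marginal distribution function of the first coordinate. -/
noncomputable def margH (ν : Measure (ℝ × ℝ)) (x : ℝ) : ℝ :=
  (ν (Set.Iic x ×ˢ Set.univ)).toReal

/-- Marginal distribution function of the second coordinate. -/
noncomputable def margG (ν : Measure (ℝ × ℝ)) (y : ℝ) : ℝ :=
  (ν (Set.univ ×ˢ Set.Iic y)).toReal

/-- Bivariate distribution function. -/
noncomputable def bivF (ν : Measure (ℝ × ℝ)) (x y : ℝ) : ℝ :=
  (ν (Set.Iic x ×ˢ Set.Iic y)).toReal

/-- The measure `dH(x) − F(dx, y)`: the first-coordinate marginal of `ν` restricted to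
`{(x', y') : y' > y}`. -/
noncomputable def margMeasAbove (ν : Measure (ℝ × ℝ)) (y : ℝ) : Measure ℝ :=
  (ν.restrict (Set.univ ×ˢ Set.Ioi y)).map Prod.fst

/-!
Continuity of `F` makes ties among the `X_i` a null event. Off that event, the concomitant can
only drop from above `y` to at most `y` at step `n` if the new observation `Z n` is the new maximum,
so the event is the disjoint union over `j < n` of
`{X_j is the strict maximum of X_0, …, X_{n-1}, Y_j > y, X_n > X_j, Y_n ≤ y}`.
Conditioning on `Z j = (x, y')`, independence gives each of these events probability
`∫_{y' > y} H(x)^(n-1) · ν((x, ∞) × (-∞, y]) dν(x, y')`, and `G(y) - F(x, y) = ν((x, ∞) × (-∞, y])`.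
-/

open Set Topology ProbabilityTheory
open scoped ENNReal

namespace ProbabilityTheory

variable {Ω α β : Type*} [MeasurableSpace Ω] [MeasurableSpace α] [MeasurableSpace β]
  {μ : Measure Ω}

theorem IndepFun.measure_preimage_prodMk_eq_lintegral [IsFiniteMeasure μ] {X : Ω → α}
    {W : Ω → β} (hX : Measurable X) (hW : Measurable W) (h : X ⟂ᵢ[μ] W)
    {T : Set (α × β)} (hT : MeasurableSet T) :
    μ ((fun ω => (X ω, W ω)) ⁻¹' T) = ∫⁻ a, μ (W ⁻¹' (Prod.mk a ⁻¹' T)) ∂(μ.map X) := by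
  rw [← Measure.map_apply (hX.prodMk hW) hT,
    (indepFun_iff_map_prod_eq_prod_map_map hX.aemeasurable hW.aemeasurable).1 h,
    Measure.prod_apply hT]
  exact lintegral_congr fun a => Measure.map_apply hW (measurable_prodMk_left hT)

theorem iIndepFun.indepFun_finset_of_notMem {ι : Type*} {Z : ι → Ω → β}
    (hind : iIndepFun Z μ) (hZ : ∀ i, Measurable (Z i)) {j : ι} {s : Finset ι} (hj : j ∉ s) :
    Z j ⟂ᵢ[μ] fun ω (i : s) => Z i ω := by
  have h := hind.indepFun_finset {j} s (Finset.disjoint_singleton_left.2 hj) hZ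
  exact h.comp (measurable_pi_apply ⟨j, Finset.mem_singleton_self j⟩) measurable_id

theorem iIndepFun.measure_forall_mem_eq_setLIntegral {ι : Type*} [IsFiniteMeasure μ]
    {Z : ι → Ω → β} (hind : iIndepFun Z μ) (hZ : ∀ i, Measurable (Z i)) {j : ι}
    {s : Finset ι} (hj : j ∉ s) {P : Set β} (hP : MeasurableSet P) {B : β → ι → Set β}
    (hB : ∀ i ∈ s, MeasurableSet {q : β × β | q.2 ∈ B q.1 i}) :
    μ {ω | Z j ω ∈ P ∧ ∀ i ∈ s, Z i ω ∈ B (Z j ω) i}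
      = ∫⁻ a in P, ∏ i ∈ s, μ (Z i ⁻¹' B a i) ∂(μ.map (Z j)) := by
  set T : Set (β × (s → β)) := {q | q.1 ∈ P ∧ ∀ i : s, q.2 i ∈ B q.1 i}
  have hT : MeasurableSet T := by
    simp only [T, ofPred_and, ofPred_forall]
    refine (measurable_fst hP).inter (MeasurableSet.iInter fun i => ?_)
    exact (hB i i.2).preimage (measurable_fst.prodMk ((measurable_pi_apply i).comp measurable_snd))
  have hslice : ∀ a, μ ((fun ω (i : s) => Z i ω) ⁻¹' (Prod.mk a ⁻¹' T))
      = P.indicator (fun a => ∏ i ∈ s, μ (Z i ⁻¹' B a i)) a := by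
    intro a
    by_cases ha : a ∈ P
    · rw [indicator_of_mem ha, ← hind.measure_inter_preimage_eq_mul s (sets := fun i => B a i)
        fun i hi => measurable_prodMk_left (hB i hi)]
      congr 1
      ext ω
      simp [T, ha]
    · rw [indicator_of_notMem ha]
      simp [T, ha]
  rw [← lintegral_indicator hP, ← lintegral_congr hslice,
    ← IndepFun.measure_preimage_prodMk_eq_lintegral (W := fun ω (i : s) => Z i ω) (hZ j)
      (measurable_pi_lambda _ fun i => hZ i)
      (hind.indepFun_finset_of_notMem hZ hj) hT]
  congr 1
  ext ω
  simp [T]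

end ProbabilityTheory

section Atoms

variable {ν : Measure (ℝ × ℝ)} [IsFiniteMeasure ν]

theorem measure_singleton_prod_Iic_eq_zero (hcont : Continuous fun p : ℝ × ℝ => bivF ν p.1 p.2)
    (x y : ℝ) : ν ({x} ×ˢ Iic y) = 0 := by
  have hle : ∀ t < x, ν.real ({x} ×ˢ Iic y) ≤ bivF ν x y - bivF ν t y := by
    intro t ht
    have hdisj : Disjoint (Iic t ×ˢ Iic y) ({x} ×ˢ Iic y) :=
      disjoint_prod.2 (Or.inl (disjoint_singleton_right.2 (not_le.2 ht)))
    have hsub : Iic t ×ˢ Iic y ∪ {x} ×ˢ Iic y ⊆ Iic x ×ˢ Iic y := by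
      rw [← union_prod]
      exact prod_mono (union_subset (Iic_subset_Iic.2 ht.le)
        (singleton_subset_iff.2 (mem_Iic.2 le_rfl))) subset_rfl
    have h := measureReal_mono (μ := ν) hsub
    rw [measureReal_union hdisj ((measurableSet_singleton x).prod measurableSet_Iic)] at h
    simp only [bivF, ← measureReal_def]
    linarith
  have hlim : Tendsto (fun t => bivF ν x y - bivF ν t y) (𝓝[<] x) (𝓝 0) := by
    have hF : Tendsto (fun t => bivF ν t y) (𝓝[<] x) (𝓝 (bivF ν x y)) :=
      ((hcont.comp (continuous_id.prodMk continuous_const)).tendsto x).mono_left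
        nhdsWithin_le_nhds
    simpa using (tendsto_const_nhds (x := bivF ν x y)).sub hF
  have hnonpos : ν.real ({x} ×ˢ Iic y) ≤ 0 :=
    ge_of_tendsto hlim (eventually_nhdsWithin_of_forall hle)
  exact (measureReal_eq_zero_iff (measure_ne_top _ _)).1 (le_antisymm hnonpos measureReal_nonneg)

theorem measure_singleton_prod_univ_eq_zero (hcont : Continuous fun p : ℝ × ℝ => bivF ν p.1 p.2)
    (x : ℝ) : ν ({x} ×ˢ univ) = 0 :=
  measure_mono_null (t := ⋃ k : ℕ, {x} ×ˢ Iic (k : ℝ))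
    (fun p hp => mem_iUnion.2 ⟨⌈p.2⌉₊, hp.1, mem_Iic.2 (Nat.le_ceil _)⟩)
    (measure_iUnion_null fun k : ℕ => measure_singleton_prod_Iic_eq_zero hcont x k)

end Atoms

theorem measure_Iio_prod_univ_eq {ν : Measure (ℝ × ℝ)} (hatom : ∀ x, ν ({x} ×ˢ univ) = 0)
    (x : ℝ) :
    ν (Iio x ×ˢ univ) = ν (Iic x ×ˢ univ) := by
  have h : Iio x ×ˢ (univ : Set ℝ) = Iic x ×ˢ univ \ {x} ×ˢ univ := by
    rw [← Iic_sdiff_right]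
    ext p
    simp [lt_iff_le_and_ne]
  rw [h, measure_sdiff_null (hatom x)]

theorem margG_sub_bivF (ν : Measure (ℝ × ℝ)) [IsFiniteMeasure ν] (x y : ℝ) :
    margG ν y - bivF ν x y = ν.real (Ioi x ×ˢ Iic y) := by
  have h : Ioi x ×ˢ Iic y = univ ×ˢ Iic y \ Iic x ×ˢ Iic y := by
    ext p
    simp only [mem_prod, mem_Ioi, mem_Iic, Set.mem_sdiff, mem_univ, true_and]
    grind
  rw [h, measureReal_sdiff (prod_mono (subset_univ _) subset_rfl)
    (measurableSet_Iic.prod measurableSet_Iic)]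
  rfl

theorem integral_margMeasAbove_eq_toReal_lintegral (ν : Measure (ℝ × ℝ)) [IsFiniteMeasure ν]
    (m : ℕ) (y : ℝ) :
    ∫ x, margH ν x ^ m * (margG ν y - bivF ν x y) ∂(margMeasAbove ν y)
      = (∫⁻ p in univ ×ˢ Ioi y, ν (Iic p.1 ×ˢ univ) ^ m * ν (Ioi p.1 ×ˢ Iic y) ∂ν).toReal := by
  set g : ℝ → ℝ≥0∞ := fun x => ν (Iic x ×ˢ univ) ^ m * ν (Ioi x ×ˢ Iic y)
  have hg : Measurable g := by
    have hH : Monotone fun x : ℝ => ν (Iic x ×ˢ univ) := fun a b hab =>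
      measure_mono (prod_mono (Iic_subset_Iic.2 hab) subset_rfl)
    have hG : Antitone fun x : ℝ => ν (Ioi x ×ˢ Iic y) := fun a b hab =>
      measure_mono (prod_mono (Ioi_subset_Ioi hab) subset_rfl)
    exact (hH.measurable.pow_const m).mul hG.measurable
  have hint : ∀ x, margH ν x ^ m * (margG ν y - bivF ν x y) = (g x).toReal := by
    intro x
    rw [margG_sub_bivF, ENNReal.toReal_mul, ENNReal.toReal_pow, margH, measureReal_def]
  simp_rw [hint]
  rw [margMeasAbove,
    integral_map measurable_fst.aemeasurable hg.ennreal_toReal.aestronglyMeasurable]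
  have hg_fst : Measurable fun p : ℝ × ℝ => g p.1 := hg.comp measurable_fst
  rw [integral_toReal hg_fst.aemeasurable
    (ae_of_all _ fun p => by simp [g, ENNReal.mul_lt_top, measure_lt_top])]

def downCrossBox (n : ℕ) (y : ℝ) (p : ℝ × ℝ) (i : ℕ) : Set (ℝ × ℝ) :=
  if i = n then Ioi p.1 ×ˢ Iic y else Iio p.1 ×ˢ univ

-- Stated as `z j ∈ P ∧ ∀ i ∈ s, z i ∈ B (z j) i` to match
-- `iIndepFun.measure_forall_mem_eq_setLIntegral`.
def DownCrossesAt (n : ℕ) (y : ℝ) (z : ℕ → ℝ × ℝ) (j : ℕ) : Prop :=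
  z j ∈ univ ×ˢ Ioi y ∧ ∀ i ∈ insert n ((Finset.range n).erase j), z i ∈ downCrossBox n y (z j) i

section DownCrossing

variable {n j : ℕ} {y : ℝ} {z : ℕ → ℝ × ℝ}

theorem downCrossesAt_iff : DownCrossesAt n y z j ↔
    y < (z j).2 ∧ (∀ i < n, i ≠ j → (z i).1 < (z j).1) ∧ (z j).1 < (z n).1 ∧ (z n).2 ≤ y := by
  have hlow : ∀ i < n, z i ∈ downCrossBox n y (z j) i ↔ (z i).1 < (z j).1 := fun i hi => by
    simp [downCrossBox, hi.ne]
  have htop : z n ∈ downCrossBox n y (z j) n ↔ (z j).1 < (z n).1 ∧ (z n).2 ≤ y := by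
    simp [downCrossBox]
  simp only [DownCrossesAt, Finset.forall_mem_insert, Finset.mem_erase, Finset.mem_range, htop,
    mem_prod, mem_univ, mem_Ioi, true_and]
  grind

theorem DownCrossesAt.eq {k : ℕ} (hj : j < n) (hk : k < n) (hzj : DownCrossesAt n y z j)
    (hzk : DownCrossesAt n y z k) : j = k := by
  by_contra hjk
  have h1 := (downCrossesAt_iff.1 hzj).2.1 k hk (Ne.symm hjk)
  have h2 := (downCrossesAt_iff.1 hzk).2.1 j hj hjk
  exact lt_asymm h1 h2

theorem lt_and_le_iff_exists_downCrossesAt {c c' : ℝ} (hinj : InjOn (fun i => (z i).1) (Iic n))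
    (hc : ∃ j < n, c = (z j).2 ∧ ∀ i < n, (z i).1 ≤ (z j).1)
    (hc' : ∃ j < n + 1, c' = (z j).2 ∧ ∀ i < n + 1, (z i).1 ≤ (z j).1) :
    y < c ∧ c' ≤ y ↔ ∃ j < n, DownCrossesAt n y z j := by
  obtain ⟨j, hj, rfl, hjmax⟩ := hc
  obtain ⟨k, hk, rfl, hkmax⟩ := hc'
  constructor
  · rintro ⟨hyj, hky⟩
    have hne : ∀ i ≤ n, i ≠ j → (z i).1 ≠ (z j).1 := fun i hi hij h =>
      hij (hinj (mem_Iic.2 hi) (mem_Iic.2 hj.le) h)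
    obtain rfl : k = n := by
      by_contra hkn
      have hkj : k = j := by
        by_contra hkj
        exact hne k (by omega) hkj (le_antisymm (hjmax k (by omega)) (hkmax j (by omega)))
      subst hkj
      linarith
    refine ⟨j, hj, downCrossesAt_iff.2 ⟨hyj, fun i hi hij => ?_, ?_, hky⟩⟩
    · exact (hjmax i hi).lt_of_ne (hne i hi.le hij)
    · exact (hkmax j (by omega)).lt_of_ne (hne k le_rfl (by omega)).symm
  · rintro ⟨j', hj', hcross⟩
    obtain ⟨hyj', hmax, hj'k, hky⟩ := downCrossesAt_iff.1 hcross
    obtain rfl : j = j' := by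
      by_contra hjj'
      exact (hmax j hj hjj').not_ge (hjmax j' hj')
    obtain rfl : k = n := by
      by_contra hkn
      have hkj : (z k).1 ≤ (z j).1 := hjmax k (by omega)
      have hnk : (z n).1 ≤ (z k).1 := hkmax n (by omega)
      linarith
    exact ⟨hyj', hky⟩

end DownCrossing

theorem measurableSet_setOf_mem_and_forall_mem {Ω β ι : Type*} [MeasurableSpace Ω]
    [MeasurableSpace β] {Z : ι → Ω → β} (hZ : ∀ i, Measurable (Z i)) {j : ι} {s : Finset ι}
    {P : Set β} (hP : MeasurableSet P) {B : β → ι → Set β}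
    (hB : ∀ i ∈ s, MeasurableSet {q : β × β | q.2 ∈ B q.1 i}) :
    MeasurableSet {ω | Z j ω ∈ P ∧ ∀ i ∈ s, Z i ω ∈ B (Z j ω) i} := by
  simp only [ofPred_and, ofPred_forall]
  exact (hZ j hP).inter (MeasurableSet.biInter s.countable_toSet fun i hi =>
    (hB i hi).preimage ((hZ j).prodMk (hZ i)))

theorem measurableSet_setOf_mem_downCrossBox (n : ℕ) (y : ℝ) (i : ℕ) :
    MeasurableSet {q : (ℝ × ℝ) × (ℝ × ℝ) | q.2 ∈ downCrossBox n y q.1 i} := by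
  unfold downCrossBox
  split_ifs
  · simp only [mem_prod, mem_Ioi, mem_Iic, ofPred_and]
    exact (measurableSet_lt measurable_fst.fst measurable_snd.fst).inter
      (measurableSet_le measurable_snd.snd measurable_const)
  · simp only [mem_prod, mem_Iio, mem_univ, and_true]
    exact measurableSet_lt measurable_snd.fst measurable_fst.fst

theorem measurableSet_downCrossesAt {Ω : Type*} [MeasurableSpace Ω] {Z : ℕ → Ω → ℝ × ℝ}
    (hZ : ∀ i, Measurable (Z i)) (n : ℕ) (y : ℝ) (j : ℕ) :
    MeasurableSet {ω | DownCrossesAt n y (fun i => Z i ω) j} :=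
  measurableSet_setOf_mem_and_forall_mem hZ (MeasurableSet.univ.prod measurableSet_Ioi)
    fun i _ => measurableSet_setOf_mem_downCrossBox n y i

theorem pairwiseDisjoint_downCrossesAt {Ω : Type*} (n : ℕ) (y : ℝ) (Z : ℕ → Ω → ℝ × ℝ) :
    PairwiseDisjoint ↑(Finset.range n) fun j => {ω | DownCrossesAt n y (fun i => Z i ω) j} :=
  fun _ hj _ hk hjk => disjoint_left.2 fun ω hωj hωk =>
    hjk (DownCrossesAt.eq (y := y) (z := fun i => Z i ω) (Finset.mem_range.1 hj)
      (Finset.mem_range.1 hk) hωj hωk)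

section IIDSample

variable {Ω : Type*} [MeasurableSpace Ω] {μ : Measure Ω} [IsFiniteMeasure μ]
  {ν : Measure (ℝ × ℝ)} {Z : ℕ → Ω → ℝ × ℝ}

theorem measure_fst_eq_fst_eq_zero (hZ : ∀ i, Measurable (Z i)) (hind : iIndepFun Z μ)
    (hlaw : ∀ i, μ.map (Z i) = ν) (hatom : ∀ x, ν ({x} ×ˢ univ) = 0) {i j : ℕ} (hij : i ≠ j) :
    μ {ω | (Z i ω).1 = (Z j ω).1} = 0 := by
  have hslice : ∀ a : ℝ × ℝ, μ (Z j ⁻¹' ({a.1} ×ˢ univ)) = 0 := fun a => by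
    rw [← Measure.map_apply (hZ j) ((measurableSet_singleton _).prod MeasurableSet.univ), hlaw,
      hatom]
  refine (IndepFun.measure_preimage_prodMk_eq_lintegral (hZ i) (hZ j) (hind.indepFun hij)
    (measurableSet_eq_fun measurable_fst.fst measurable_snd.fst)).trans ?_
  refine (lintegral_congr fun a => ?_).trans lintegral_zero
  convert hslice a using 3
  ext q
  simp [eq_comm]

theorem ae_injective_fst (hZ : ∀ i, Measurable (Z i)) (hind : iIndepFun Z μ)
    (hlaw : ∀ i, μ.map (Z i) = ν) (hatom : ∀ x, ν ({x} ×ˢ univ) = 0) :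
    ∀ᵐ ω ∂μ, Function.Injective fun i => (Z i ω).1 := by
  have hne : ∀ᵐ ω ∂μ, ∀ i j, i ≠ j → (Z i ω).1 ≠ (Z j ω).1 := by
    refine ae_all_iff.2 fun i => ae_all_iff.2 fun j => ?_
    by_cases hij : i = j
    · exact ae_of_all _ fun ω h => absurd hij h
    · filter_upwards [measure_eq_zero_iff_ae_notMem.1
        (measure_fst_eq_fst_eq_zero hZ hind hlaw hatom hij)] with ω hω _
      exact hω
  filter_upwards [hne] with ω hω i j hij
  by_contra h
  exact hω i j h hij

theorem measure_downCrossesAt (hZ : ∀ i, Measurable (Z i)) (hind : iIndepFun Z μ)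
    (hlaw : ∀ i, μ.map (Z i) = ν) (hatom : ∀ x, ν ({x} ×ˢ univ) = 0) {n j : ℕ} (hj : j < n)
    (y : ℝ) :
    μ {ω | DownCrossesAt n y (fun i => Z i ω) j}
      = ∫⁻ p in univ ×ˢ Ioi y, ν (Iic p.1 ×ˢ univ) ^ (n - 1) * ν (Ioi p.1 ×ˢ Iic y) ∂ν := by
  have hjs : j ∉ insert n ((Finset.range n).erase j) := by simp [hj.ne]
  have hlawi : ∀ i p, μ (Z i ⁻¹' downCrossBox n y p i) = ν (downCrossBox n y p i) := fun i p => by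
    have hbox : MeasurableSet (downCrossBox n y p i) :=
      measurable_prodMk_left (measurableSet_setOf_mem_downCrossBox n y i)
    rw [← Measure.map_apply (hZ i) hbox, hlaw]
  refine (hind.measure_forall_mem_eq_setLIntegral hZ hjs
    (MeasurableSet.univ.prod measurableSet_Ioi)
    fun i _ => measurableSet_setOf_mem_downCrossBox n y i).trans ?_
  rw [hlaw j]
  refine lintegral_congr fun p => ?_
  have hlow : ∀ i ∈ (Finset.range n).erase j,
      ν (downCrossBox n y p i) = ν (Iic p.1 ×ˢ univ) := fun i hi => by
    rw [downCrossBox, if_neg (Finset.mem_range.1 (Finset.mem_of_mem_erase hi)).ne,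
      measure_Iio_prod_univ_eq hatom]
  simp only [hlawi]
  rw [Finset.prod_insert (by simp), Finset.prod_congr rfl hlow, Finset.prod_const,
    Finset.card_erase_of_mem (Finset.mem_range.2 hj), Finset.card_range, downCrossBox, if_pos rfl,
    mul_comm]

end IIDSample

theorem stmt10 {Ω : Type*} [MeasurableSpace Ω] (μ : Measure Ω) [IsProbabilityMeasure μ]
    (ν : Measure (ℝ × ℝ)) [IsProbabilityMeasure ν]
    (Z : ℕ → Ω → ℝ × ℝ) (hZmeas : ∀ i, Measurable (Z i))
    (hindep : ProbabilityTheory.iIndepFun Z μ)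
    (hlaw : ∀ i, Measure.map (Z i) μ = ν)
    (hcont : Continuous fun p : ℝ × ℝ => bivF ν p.1 p.2)
    (C : ℕ → Ω → ℝ)
    (hC : ∀ n, 1 ≤ n → ∀ ω, ∃ j < n, C n ω = (Z j ω).2 ∧ ∀ i < n, (Z i ω).1 ≤ (Z j ω).1)
    (n : ℕ) (hn : 1 ≤ n) (y : ℝ) :
    (μ {ω | y < C n ω ∧ C (n + 1) ω ≤ y}).toReal
      = n * ∫ x, margH ν x ^ (n - 1) * (margG ν y - bivF ν x y)
          ∂(margMeasAbove ν y) := by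
  have hatom := measure_singleton_prod_univ_eq_zero hcont
  have hcross : {ω | y < C n ω ∧ C (n + 1) ω ≤ y}
      =ᵐ[μ] ⋃ j ∈ Finset.range n, {ω | DownCrossesAt n y (fun i => Z i ω) j} := by
    refine eventuallyEq_set.2 ?_
    filter_upwards [ae_injective_fst hZmeas hindep hlaw hatom] with ω hω
    simp only [mem_ofPred_eq, mem_iUnion, Finset.mem_range, exists_prop]
    exact lt_and_le_iff_exists_downCrossesAt hω.injOn (hC n hn ω) (hC (n + 1) (by omega) ω)
  rw [measure_congr hcross, measure_biUnion_finset (pairwiseDisjoint_downCrossesAt n y Z)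
      fun j _ => measurableSet_downCrossesAt hZmeas n y j,
    Finset.sum_congr rfl fun j hj =>
      measure_downCrossesAt hZmeas hindep hlaw hatom (Finset.mem_range.1 hj) y,
    Finset.sum_const, Finset.card_range, nsmul_eq_mul, ENNReal.toReal_mul, ENNReal.toReal_natCast,
    integral_margMeasAbove_eq_toReal_lintegral]
end

section
/- In the F^α-scheme, P(M_n > X_n and M_{n+1} = X_{n+1}) = (α_{n+1}/A_{n+1}) · (A_{n-1}/A_n) for each n ≥ 2. -/
/-!
With `W` the maximum of the observations before `X n`, the event is `X n < W ≤ X (n + 1)`, that is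
`{W ≤ X n ⊔ X (n + 1)} \ {W ≤ X n}`. A maximum of independent `F ^ αᵢ`-variables is an
`F ^ (∑ αᵢ)`-variable, and maxima over disjoint index sets are independent, so both terms are
instances of `P(V ≤ U) = p / (p + q)` for independent `U ~ F ^ p`, `V ~ F ^ q`. Conditioning on
`U`, this is `E[F(U) ^ q] = p / (p + q)`, which the layer cake formula computes from the tail
`P(t < F(U)) = 1 - t ^ p`, valid for `0 < t < 1` by continuity of `F`.
-/

open MeasureTheory ProbabilityTheory Filter Set
open scoped Interval

lemma Monotone.exists_preimage_Iic_eq_Iic {F : ℝ → ℝ} (hFmono : Monotone F)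
    (hFcont : Continuous F) {x a b : ℝ} (ha : F a ≤ x) (hb : x < F b) :
    ∃ s, F ⁻¹' Iic x = Iic s ∧ F s = x := by
  have hbdd : BddAbove (F ⁻¹' Iic x) :=
    ⟨b, fun w hw => (hFmono.reflect_lt (lt_of_le_of_lt hw hb)).le⟩
  have hmem : sSup (F ⁻¹' Iic x) ∈ F ⁻¹' Iic x :=
    (isClosed_Iic.preimage hFcont).csSup_mem ⟨a, ha⟩ hbdd
  obtain ⟨w, -, hw⟩ : x ∈ F '' Icc a b :=
    intermediate_value_Icc (hFmono.reflect_lt (lt_of_le_of_lt ha hb)).le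
      hFcont.continuousOn ⟨ha, hb.le⟩
  refine ⟨sSup (F ⁻¹' Iic x), ?_, le_antisymm hmem ?_⟩
  · exact Subset.antisymm (fun w hw => le_csSup hbdd hw) fun w hw => (hFmono hw).trans hmem
  · calc x = F w := hw.symm
      _ ≤ F (sSup (F ⁻¹' Iic x)) := hFmono (le_csSup hbdd (show F w ≤ x from hw.le))

lemma integral_one_sub_rpow_mul_rpow {p q : ℝ} (hp : 0 < p) (hq : 0 < q) :
    ∫ t in (0 : ℝ)..1, (1 - t ^ p) * (q * t ^ (q - 1)) = p / (p + q) := by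
  have hpow : ∀ᵐ t, t ∈ Ι (0 : ℝ) 1 → (1 - t ^ p) * (q * t ^ (q - 1))
      = q * t ^ (q - 1) - q * t ^ (p + q - 1) := by
    refine .of_forall fun t ht => ?_
    rw [uIoc_of_le zero_le_one] at ht
    rw [show p + q - 1 = p + (q - 1) by ring, Real.rpow_add ht.1]
    ring
  rw [intervalIntegral.integral_congr_ae hpow, intervalIntegral.integral_sub,
    intervalIntegral.integral_const_mul, intervalIntegral.integral_const_mul,
    integral_rpow (Or.inl (by linarith)), integral_rpow (Or.inl (by linarith))]
  · simp only [sub_add_cancel, Real.one_rpow, Real.zero_rpow hq.ne',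
      Real.zero_rpow (by positivity : p + q ≠ 0)]
    field_simp
    ring
  all_goals exact (intervalIntegral.intervalIntegrable_rpow' (by linarith)).const_mul q

namespace Finset

variable {ι α : Type*} [SemilatticeSup α]

lemma sup'_range_add_one (f : ℕ → α) {k : ℕ} (hk : (range k).Nonempty) :
    (range (k + 1)).sup' nonempty_range_add_one f = f k ⊔ (range k).sup' hk f :=
  (sup'_congr _ range_add_one fun _ _ => rfl).trans (sup'_insert hk f)

lemma sup'_attach (s : Finset ι) (hs : s.Nonempty) (f : ι → α) :
    s.attach.sup' hs.attach (fun i => f i) = s.sup' hs f :=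
  le_antisymm (sup'_le _ _ fun i _ => le_sup' f i.2)
    (sup'_le _ _ fun i hi => le_sup' (fun j : s => f j) (s.mem_attach ⟨i, hi⟩))

end Finset

section PowerLaw

variable {Ω : Type*} [MeasurableSpace Ω] {μ : Measure Ω} [IsProbabilityMeasure μ]
  {F : ℝ → ℝ} {U V : Ω → ℝ} {p q : ℝ}

lemma measure_lt_comp_eq_one_sub_rpow (hFmono : Monotone F) (hFcont : Continuous F)
    (hFbot : Tendsto F atBot (nhds 0)) (hFtop : Tendsto F atTop (nhds 1)) (hU : Measurable U)
    (hlaw : ∀ x, μ {ω | U ω ≤ x} = ENNReal.ofReal (F x ^ p)) {t : ℝ} (ht₀ : 0 < t)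
    (ht₁ : t < 1) : μ {ω | t < F (U ω)} = ENNReal.ofReal (1 - t ^ p) := by
  obtain ⟨a, ha⟩ := (hFbot.eventually (eventually_lt_nhds ht₀)).exists
  obtain ⟨b, hb⟩ := (hFtop.eventually (eventually_gt_nhds ht₁)).exists
  obtain ⟨s, hs, hFs⟩ := hFmono.exists_preimage_Iic_eq_Iic hFcont ha.le hb
  have hset : {ω | t < F (U ω)} = {ω | U ω ≤ s}ᶜ := by
    ext ω
    simp [← mem_Iic (b := s), ← hs]
  rw [hset, prob_compl_eq_one_sub (measurableSet_le hU measurable_const), hlaw, hFs,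
    ENNReal.ofReal_sub _ (by positivity), ENNReal.ofReal_one]

lemma lintegral_ofReal_rpow_comp_eq (hFmono : Monotone F) (hFcont : Continuous F)
    (hFbot : Tendsto F atBot (nhds 0)) (hFtop : Tendsto F atTop (nhds 1)) (hU : Measurable U)
    (hlaw : ∀ x, μ {ω | U ω ≤ x} = ENNReal.ofReal (F x ^ p)) (hp : 0 < p) (hq : 0 < q) :
    ∫⁻ ω, ENNReal.ofReal (F (U ω) ^ q) ∂μ = ENNReal.ofReal (p / (p + q)) := by
  have hF₀ : ∀ x, 0 ≤ F x := fun x => hFmono.le_of_tendsto hFbot x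
  have hF₁ : ∀ x, F x ≤ 1 := fun x => hFmono.ge_of_tendsto hFtop x
  have hprimitive : ∀ y, 0 ≤ y → ∫ t in (0 : ℝ)..y, q * t ^ (q - 1) = y ^ q := by
    intro y hy
    rw [intervalIntegral.integral_const_mul, integral_rpow (Or.inl (by linarith)),
      sub_add_cancel, Real.zero_rpow hq.ne', sub_zero]
    field_simp
  have htail : ∀ t ∈ Ioi (0 : ℝ), μ {ω | t < F (U ω)} * ENNReal.ofReal (q * t ^ (q - 1))
      = (Iio 1).indicator (fun t => ENNReal.ofReal ((1 - t ^ p) * (q * t ^ (q - 1)))) t := by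
    intro t ht
    rcases lt_or_ge t 1 with ht₁ | ht₁
    · rw [indicator_of_mem (show t ∈ Iio 1 from ht₁), measure_lt_comp_eq_one_sub_rpow hFmono
        hFcont hFbot hFtop hU hlaw ht ht₁,
        ← ENNReal.ofReal_mul (sub_nonneg.2 (Real.rpow_le_one ht.le ht₁.le hp.le))]
    · have hempty : {ω | t < F (U ω)} = ∅ := by
        ext ω
        simpa using (hF₁ _).trans ht₁
      rw [indicator_of_notMem (show t ∉ Iio 1 from not_lt.2 ht₁), hempty, measure_empty,
        zero_mul]
  have hint : IntervalIntegrable (fun t => (1 - t ^ p) * (q * t ^ (q - 1))) volume 0 1 :=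
    ((intervalIntegral.intervalIntegrable_rpow' (by linarith)).const_mul q).continuousOn_mul
      (continuousOn_const.sub (continuousOn_id.rpow_const fun _ _ => Or.inr hp.le))
  have hnonneg : 0 ≤ᵐ[volume.restrict (Ioc 0 1)] fun t => (1 - t ^ p) * (q * t ^ (q - 1)) :=
    ae_restrict_of_forall_mem measurableSet_Ioc fun t ht =>
      mul_nonneg (sub_nonneg.2 (Real.rpow_le_one ht.1.le ht.2 hp.le))
        (mul_nonneg hq.le (Real.rpow_nonneg ht.1.le _))
  calc ∫⁻ ω, ENNReal.ofReal (F (U ω) ^ q) ∂μ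
      = ∫⁻ ω, ENNReal.ofReal (∫ t in (0 : ℝ)..F (U ω), q * t ^ (q - 1)) ∂μ := by
        simp_rw [hprimitive _ (hF₀ _)]
    _ = ∫⁻ t in Ioi 0, μ {ω | t < F (U ω)} * ENNReal.ofReal (q * t ^ (q - 1)) :=
        lintegral_comp_eq_lintegral_meas_lt_mul μ (.of_forall fun ω => hF₀ _)
          (hFcont.measurable.comp hU).aemeasurable
          (fun t _ => (intervalIntegral.intervalIntegrable_rpow' (by linarith)).const_mul q)
          (ae_restrict_of_forall_mem measurableSet_Ioi fun t ht =>
            mul_nonneg hq.le (Real.rpow_nonneg (le_of_lt ht) _))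
    _ = ∫⁻ t in Ioc 0 1, ENNReal.ofReal ((1 - t ^ p) * (q * t ^ (q - 1))) := by
        rw [setLIntegral_congr_fun measurableSet_Ioi htail, lintegral_indicator measurableSet_Iio,
          Measure.restrict_restrict measurableSet_Iio, Iio_inter_Ioi, setLIntegral_congr
          Ioo_ae_eq_Ioc]
    _ = ENNReal.ofReal (p / (p + q)) := by
        rw [← ofReal_integral_eq_lintegral_ofReal
          ((intervalIntegrable_iff_integrableOn_Ioc_of_le zero_le_one).1 hint) hnonneg,
          ← intervalIntegral.integral_of_le zero_le_one, integral_one_sub_rpow_mul_rpow hp hq]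

lemma ProbabilityTheory.IndepFun.measure_le_eq_div (hFmono : Monotone F) (hFcont : Continuous F)
    (hFbot : Tendsto F atBot (nhds 0)) (hFtop : Tendsto F atTop (nhds 1))
    (hU : Measurable U) (hV : Measurable V) (hUV : IndepFun U V μ)
    (hUlaw : ∀ x, μ {ω | U ω ≤ x} = ENNReal.ofReal (F x ^ p))
    (hVlaw : ∀ x, μ {ω | V ω ≤ x} = ENNReal.ofReal (F x ^ q)) (hp : 0 < p) (hq : 0 < q) :
    μ {ω | V ω ≤ U ω} = ENNReal.ofReal (p / (p + q)) := by
  have hle : MeasurableSet {z : ℝ × ℝ | z.2 ≤ z.1} :=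
    measurableSet_le measurable_snd measurable_fst
  calc μ {ω | V ω ≤ U ω} = μ.map (fun ω => (U ω, V ω)) {z | z.2 ≤ z.1} :=
        (Measure.map_apply (hU.prodMk hV) hle).symm
    _ = ((μ.map U).prod (μ.map V)) {z | z.2 ≤ z.1} := by
        rw [(indepFun_iff_map_prod_eq_prod_map_map hU.aemeasurable hV.aemeasurable).1 hUV]
    _ = ∫⁻ u, (μ.map V) (Iic u) ∂(μ.map U) := Measure.prod_apply hle
    _ = ∫⁻ u, ENNReal.ofReal (F u ^ q) ∂(μ.map U) := by
        simp_rw [Measure.map_apply hV measurableSet_Iic]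
        exact lintegral_congr fun u => hVlaw u
    _ = ∫⁻ ω, ENNReal.ofReal (F (U ω) ^ q) ∂μ :=
        lintegral_map (hFcont.measurable.pow_const q).ennreal_ofReal hU
    _ = ENNReal.ofReal (p / (p + q)) :=
        lintegral_ofReal_rpow_comp_eq hFmono hFcont hFbot hFtop hU hUlaw hp hq

end PowerLaw

namespace ProbabilityTheory.iIndepFun

variable {Ω ι : Type*} [MeasurableSpace Ω] {μ : Measure Ω} {X : ι → Ω → ℝ}

lemma measure_sup'_le (hX : iIndepFun X μ) {s : Finset ι} (hs : s.Nonempty) (x : ℝ) :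
    μ {ω | s.sup' hs (X · ω) ≤ x} = ∏ i ∈ s, μ {ω | X i ω ≤ x} := by
  have hset : {ω | s.sup' hs (X · ω) ≤ x} = ⋂ i ∈ s, X i ⁻¹' Iic x := by
    ext ω
    simp [Finset.sup'_le_iff]
  rw [hset, hX.measure_inter_preimage_eq_mul s fun _ _ => measurableSet_Iic]
  rfl

lemma indepFun_finset_sup' (hX : iIndepFun X μ) (hXm : ∀ i, Measurable (X i))
    {s t : Finset ι} (hst : Disjoint s t) (hs : s.Nonempty) (ht : t.Nonempty) :
    IndepFun (fun ω => s.sup' hs (X · ω)) (fun ω => t.sup' ht (X · ω)) μ := by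
  have hsup : ∀ u : Finset ι, (hu : u.Nonempty) →
      Measurable fun g : u → ℝ => u.attach.sup' hu.attach g := fun u hu => by
    convert Finset.measurable_sup' hu.attach fun (i : u) _ =>
      measurable_pi_apply (X := fun _ : u => ℝ) i using 1
    ext g
    rw [Finset.sup'_apply]
  convert (hX.indepFun_finset s t hst hXm).comp (hsup s hs) (hsup t ht) using 1 <;>
    ext ω <;> exact (Finset.sup'_attach _ _ _).symm

end ProbabilityTheory.iIndepFun

section PowerScheme

variable {Ω ι : Type*} [MeasurableSpace Ω] {μ : Measure Ω} {F : ℝ → ℝ} {α : ι → ℝ}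
  {X : ι → Ω → ℝ}

lemma measurable_finset_sup' (hXm : ∀ i, Measurable (X i)) {s : Finset ι} (hs : s.Nonempty) :
    Measurable fun ω => s.sup' hs (X · ω) := by
  simpa only [← Finset.sup'_apply] using Finset.measurable_sup' hs fun i _ => hXm i

lemma measure_sup'_le_eq_rpow_sum (hX : iIndepFun X μ) (hF₀ : ∀ x, 0 ≤ F x)
    (hα : ∀ i, 0 ≤ α i) (hlaw : ∀ i x, μ {ω | X i ω ≤ x} = ENNReal.ofReal (F x ^ α i))
    {s : Finset ι} (hs : s.Nonempty) (x : ℝ) :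
    μ {ω | s.sup' hs (X · ω) ≤ x} = ENNReal.ofReal (F x ^ ∑ i ∈ s, α i) := by
  rw [hX.measure_sup'_le hs, Real.rpow_sum_of_nonneg (hF₀ x) fun i _ => hα i,
    ENNReal.ofReal_prod_of_nonneg fun i _ => Real.rpow_nonneg (hF₀ x) _]
  exact Finset.prod_congr rfl fun i _ => hlaw i x

lemma measure_sup'_le_sup' (hFmono : Monotone F) (hFcont : Continuous F)
    (hFbot : Tendsto F atBot (nhds 0)) (hFtop : Tendsto F atTop (nhds 1))
    (hα : ∀ i, 0 < α i) (hXm : ∀ i, Measurable (X i)) (hX : iIndepFun X μ)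
    (hlaw : ∀ i x, μ {ω | X i ω ≤ x} = ENNReal.ofReal (F x ^ α i))
    {s t : Finset ι} (hst : Disjoint s t) (hs : s.Nonempty) (ht : t.Nonempty) :
    μ {ω | t.sup' ht (X · ω) ≤ s.sup' hs (X · ω)}
      = ENNReal.ofReal ((∑ i ∈ s, α i) / (∑ i ∈ s, α i + ∑ i ∈ t, α i)) := by
  have := hX.isProbabilityMeasure
  have hF₀ : ∀ x, 0 ≤ F x := fun x => hFmono.le_of_tendsto hFbot x
  exact IndepFun.measure_le_eq_div hFmono hFcont hFbot hFtop (measurable_finset_sup' hXm hs)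
    (measurable_finset_sup' hXm ht) (hX.indepFun_finset_sup' hXm hst hs ht)
    (measure_sup'_le_eq_rpow_sum hX hF₀ (fun i => (hα i).le) hlaw hs)
    (measure_sup'_le_eq_rpow_sum hX hF₀ (fun i => (hα i).le) hlaw ht)
    (Finset.sum_pos (fun i _ => hα i) hs) (Finset.sum_pos (fun i _ => hα i) ht)

lemma measure_lt_sup'_le (hFmono : Monotone F) (hFcont : Continuous F)
    (hFbot : Tendsto F atBot (nhds 0)) (hFtop : Tendsto F atTop (nhds 1))
    (hα : ∀ i, 0 < α i) (hXm : ∀ i, Measurable (X i)) (hX : iIndepFun X μ)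
    (hlaw : ∀ i x, μ {ω | X i ω ≤ x} = ENNReal.ofReal (F x ^ α i))
    {t : Finset ι} (ht : t.Nonempty) {i j : ι} (hi : i ∉ t) (hj : j ∉ t) (hij : i ≠ j) :
    μ {ω | X i ω < t.sup' ht (X · ω) ∧ t.sup' ht (X · ω) ≤ X j ω}
      = ENNReal.ofReal (α j / (∑ k ∈ t, α k + α i + α j)
          * ((∑ k ∈ t, α k) / (∑ k ∈ t, α k + α i))) := by
  classical
  have := hX.isProbabilityMeasure
  have hpair : ({i, j} : Finset ι).Nonempty := Finset.insert_nonempty _ _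
  have hevent : {ω | X i ω < t.sup' ht (X · ω) ∧ t.sup' ht (X · ω) ≤ X j ω}
      = {ω | t.sup' ht (X · ω) ≤ ({i, j} : Finset ι).sup' hpair (X · ω)}
        \ {ω | t.sup' ht (X · ω) ≤ ({i} : Finset ι).sup' (Finset.singleton_nonempty i)
          (X · ω)} := by
    ext ω
    simp only [Set.mem_sdiff, mem_ofPred_eq,
      Finset.sup'_insert (Finset.singleton_nonempty j), Finset.sup'_singleton]
    generalize t.sup' ht (X · ω) = W
    grind
  have hmeas := (measurableSet_le (measurable_finset_sup' hXm ht)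
    (measurable_finset_sup' hXm (Finset.singleton_nonempty i))).nullMeasurableSet (μ := μ)
  have hsum_nonneg : ∀ s : Finset ι, 0 ≤ ∑ k ∈ s, α k :=
    fun s => Finset.sum_nonneg fun k _ => (hα k).le
  rw [hevent, measure_sdiff (ofPred_subset_ofPred.2 fun ω hω =>
      hω.trans (Finset.le_sup' (X · ω) (by simp))) hmeas (measure_ne_top _ _),
    measure_sup'_le_sup' hFmono hFcont hFbot hFtop hα hXm hX hlaw (by simp [hi, hj]) hpair ht,
    measure_sup'_le_sup' hFmono hFcont hFbot hFtop hα hXm hX hlaw (by simp [hi]) _ ht,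
    ← ENNReal.ofReal_sub _ (div_nonneg (hsum_nonneg _) (add_nonneg (hsum_nonneg _)
      (hsum_nonneg _)))]
  have hA := Finset.sum_pos (fun k _ => hα k) ht
  have hai := hα i
  have haj := hα j
  congr 1
  simp only [Finset.sum_pair hij, Finset.sum_singleton]
  field_simp
  ring

end PowerScheme

theorem stmt17_general {Ω : Type*} [MeasurableSpace Ω] (μ : Measure Ω)
    (F : ℝ → ℝ) (hFmono : Monotone F) (hFcont : Continuous F)
    (hFbot : Tendsto F atBot (nhds 0)) (hFtop : Tendsto F atTop (nhds 1))
    (α : ℕ → ℝ) (hαpos : ∀ i, 0 < α i)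
    (X : ℕ → Ω → ℝ) (hXmeas : ∀ i, Measurable (X i))
    (hindep : ProbabilityTheory.iIndepFun X μ)
    (hlaw : ∀ i x, μ {ω | X i ω ≤ x} = ENNReal.ofReal (F x ^ α i))
    -- `M n` is the partial maximum of the first `n + 1` observations
    (M : ℕ → Ω → ℝ)
    (hMdef : ∀ n ω, M n ω = (Finset.range (n + 1)).sup' Finset.nonempty_range_add_one
      fun i => X i ω)
    (n : ℕ) (hn : 1 ≤ n) :
    μ {ω | X n ω < M n ω ∧ M (n + 1) ω = X (n + 1) ω}
      = ENNReal.ofReal ((α (n + 1) / ∑ i ∈ Finset.range (n + 2), α i)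
          * ((∑ i ∈ Finset.range n, α i) / ∑ i ∈ Finset.range (n + 1), α i)) := by
  have hne : (Finset.range n).Nonempty := Finset.nonempty_range_iff.2 (by omega)
  have hevent : {ω | X n ω < M n ω ∧ M (n + 1) ω = X (n + 1) ω}
      = {ω | X n ω < (Finset.range n).sup' hne (X · ω)
          ∧ (Finset.range n).sup' hne (X · ω) ≤ X (n + 1) ω} := by
    ext ω
    simp only [mem_ofPred_eq, hMdef, Finset.sup'_range_add_one _ Finset.nonempty_range_add_one,
      Finset.sup'_range_add_one _ hne]
    generalize (Finset.range n).sup' hne (X · ω) = W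
    grind
  rw [hevent, measure_lt_sup'_le hFmono hFcont hFbot hFtop hαpos hXmeas hindep hlaw hne
    (by simp) (by simp) (by omega)]
  simp only [Finset.sum_range_succ]

theorem stmt17 {Ω : Type*} [MeasurableSpace Ω] (μ : Measure Ω) [IsProbabilityMeasure μ]
    (F : ℝ → ℝ) (hFmono : Monotone F) (hFcont : Continuous F)
    (hFbot : Tendsto F atBot (nhds 0)) (hFtop : Tendsto F atTop (nhds 1))
    (α : ℕ → ℝ) (hαpos : ∀ i, 0 < α i) (hα1 : α 0 = 1)
    (X : ℕ → Ω → ℝ) (hXmeas : ∀ i, Measurable (X i))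
    (hindep : ProbabilityTheory.iIndepFun X μ)
    (hlaw : ∀ i x, μ {ω | X i ω ≤ x} = ENNReal.ofReal (F x ^ α i))
    -- `M n` is the partial maximum of the first `n + 1` observations
    (M : ℕ → Ω → ℝ)
    (hMdef : ∀ n ω, M n ω = (Finset.range (n + 1)).sup' Finset.nonempty_range_add_one
      fun i => X i ω)
    (n : ℕ) (hn : 1 ≤ n) :
    μ {ω | X n ω < M n ω ∧ M (n + 1) ω = X (n + 1) ω}
      = ENNReal.ofReal ((α (n + 1) / ∑ i ∈ Finset.range (n + 2), α i)
          * ((∑ i ∈ Finset.range n, α i) / ∑ i ∈ Finset.range (n + 1), α i)) :=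
  stmt17_general μ F hFmono hFcont hFbot hFtop α hαpos X hXmeas hindep hlaw M hMdef n hn
end

section
/- In the F^α-scheme with α_n → ∞ and A_n/A_{n+1} → 0: if ∑_{n=1}^∞ A_n/A_{n+1} < ∞ then P(M_n > X_n infinitely often) = 0 (so almost surely M_n = X_n for all large n), while if ∑_{n=1}^∞ A_n/A_{n+1} = ∞ then P(M_n > X_n infinitely often) = 1. -/
/-!
The record indicators of an `F^α`-scheme are independent, with a record at time `n` having
probability `α n / A n`, where `A n = α 0 + ⋯ + α n` (Nevzorov). Both facts follow from the formula
`P(records at all n ∈ S, X 0, …, X N ≤ x) = (∏ n ∈ S, α n / A n) * F x ^ A N`, proved by induction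
on `N`: if `N + 1 ∈ S`, the new observation `y = X (N + 1)` becomes the bound for the earlier ones,
and `∫_{y ≤ x} F y ^ A N d(F ^ α (N + 1))(y) = α (N + 1) / A (N + 1) * F x ^ A (N + 1)`.
Since `X n < M n` says exactly that `n` is not a record time, for `n ≥ 1` it has probability
`A (n - 1) / A n`, and the two halves are the two Borel–Cantelli lemmas.
-/

open MeasureTheory Filter Set ProbabilityTheory Topology

section PowerCDF

variable {F : ℝ → ℝ}

lemma exists_apply_eq_and_setOf_apply_le_eq_Iic (hFmono : Monotone F) (hFcont : Continuous F)
    {s b x : ℝ} (hb : F b ≤ s) (hx : s < F x) :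
    ∃ u, F u = s ∧ {y | F y ≤ s} = Iic u := by
  have hlt_of_mem : ∀ y, F y ≤ s → y < x := fun y hy =>
    lt_of_not_ge fun hxy => (hx.trans_le (hFmono hxy)).not_ge hy
  obtain ⟨w, -, hFw⟩ : ∃ w ∈ Icc b x, F w = s :=
    intermediate_value_Icc (hlt_of_mem b hb).le hFcont.continuousOn ⟨hb, hx.le⟩
  have hbdd : BddAbove {y | F y ≤ s} := ⟨x, fun y hy => (hlt_of_mem y hy).le⟩
  have hmem : sSup {y | F y ≤ s} ∈ {y | F y ≤ s} :=
    (isClosed_le hFcont continuous_const).csSup_mem ⟨w, hFw.le⟩ hbdd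
  refine ⟨sSup {y | F y ≤ s}, le_antisymm hmem (hFw.ge.trans (hFmono (le_csSup hbdd hFw.le))), ?_⟩
  ext y
  exact ⟨fun hy => le_csSup hbdd hy, fun hy => (hFmono hy).trans hmem⟩

lemma measure_setOf_lt_apply_and_le {ν : Measure ℝ} {a : ℝ} (hFmono : Monotone F)
    (hFcont : Continuous F) (hFbot : Tendsto F atBot (𝓝 0)) (ha : 0 < a)
    (hν : ∀ x, ν (Iic x) = ENNReal.ofReal (F x ^ a)) (x : ℝ) {s : ℝ} (hs : 0 < s) :
    ν {y | s < F y ∧ y ≤ x} = ENNReal.ofReal (F x ^ a - s ^ a) := by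
  rcases le_or_gt (F x) s with hxs | hxs
  · have hempty : {y | s < F y ∧ y ≤ x} = ∅ :=
      eq_empty_of_forall_notMem fun y ⟨hy, hyx⟩ => ((hFmono hyx).trans hxs).not_gt hy
    rw [hempty, measure_empty, eq_comm, ENNReal.ofReal_eq_zero, sub_nonpos]
    exact Real.rpow_le_rpow (hFmono.le_of_tendsto hFbot x) hxs ha.le
  · obtain ⟨b, hb⟩ := (hFbot.eventually_lt_const hs).exists
    obtain ⟨u, hFu, hu⟩ := exists_apply_eq_and_setOf_apply_le_eq_Iic hFmono hFcont hb.le hxs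
    have hux : u ≤ x := le_of_not_gt fun hxu => ((hFmono hxu.le).trans_eq hFu).not_gt hxs
    have hset : {y | s < F y ∧ y ≤ x} = Iic x \ Iic u := by
      ext y
      simp only [Set.mem_sdiff, mem_Iic, ← hu, mem_ofPred_eq, not_le, and_comm]
    rw [hset, measure_sdiff (Iic_subset_Iic.2 hux) measurableSet_Iic.nullMeasurableSet
      (by simp [hν]), hν, hν, hFu, ENNReal.ofReal_sub _ (Real.rpow_nonneg hs.le a)]

lemma lintegral_Ioi_ofReal_rpow_sub_rpow {c γ : ℝ} (hc : 0 ≤ c) (hγ : 0 < γ) :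
    ∫⁻ t in Ioi 0, ENNReal.ofReal (c ^ γ - t ^ γ) = ENNReal.ofReal (γ / (γ + 1) * c ^ (γ + 1)) := by
  have hcont : Continuous fun t : ℝ => c ^ γ - t ^ γ :=
    continuous_const.sub (Real.continuous_rpow_const hγ.le)
  have htail : ∫⁻ t in Ioi c, ENNReal.ofReal (c ^ γ - t ^ γ) = 0 :=
    setLIntegral_eq_zero measurableSet_Ioi fun t ht => ENNReal.ofReal_eq_zero.2 <|
      sub_nonpos.2 (Real.rpow_le_rpow hc (le_of_lt ht) hγ.le)
  have hnonneg : ∀ᵐ t ∂volume.restrict (Ioc 0 c), 0 ≤ c ^ γ - t ^ γ :=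
    (ae_restrict_iff' measurableSet_Ioc).2 <| .of_forall fun t ht =>
      sub_nonneg.2 (Real.rpow_le_rpow ht.1.le ht.2 hγ.le)
  rw [← Ioc_union_Ioi_eq_Ioi hc, lintegral_union measurableSet_Ioi Ioc_disjoint_Ioi_same, htail,
    add_zero, ← ofReal_integral_eq_lintegral_ofReal
      ((hcont.continuousOn.integrableOn_Icc).mono_set Ioc_subset_Icc_self) hnonneg,
    ← intervalIntegral.integral_of_le hc, intervalIntegral.integral_sub intervalIntegrable_const
      (intervalIntegral.intervalIntegrable_rpow' (by linarith)),
    integral_rpow (Or.inl (by linarith)), intervalIntegral.integral_const, smul_eq_mul,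
    Real.zero_rpow (by linarith), Real.rpow_add_one' hc (by linarith)]
  congr 1
  field_simp
  ring

lemma setLIntegral_Iic_ofReal_rpow {ν : Measure ℝ} {a β : ℝ} (hFmono : Monotone F)
    (hFcont : Continuous F) (hFbot : Tendsto F atBot (𝓝 0)) (ha : 0 < a) (hβ : 0 < β)
    (hν : ∀ x, ν (Iic x) = ENNReal.ofReal (F x ^ a)) (x : ℝ) :
    ∫⁻ y in Iic x, ENNReal.ofReal (F y ^ β) ∂ν = ENNReal.ofReal (a / (a + β) * F x ^ (a + β)) := by
  have hF0 : ∀ y, 0 ≤ F y := hFmono.le_of_tendsto hFbot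
  have hcont : Continuous fun y => F y ^ β := (Real.continuous_rpow_const hβ.le).comp hFcont
  -- layer cake, with `{y | t < F y ^ β} = {y | t ^ β⁻¹ < F y}`
  have hslice : EqOn (fun t => ν.restrict (Iic x) {y | t < F y ^ β})
      (fun t => ENNReal.ofReal ((F x ^ β) ^ (a / β) - t ^ (a / β))) (Ioi 0) := by
    intro t (ht : 0 < t)
    have hset : {y | t < F y ^ β} ∩ Iic x = {y | t ^ β⁻¹ < F y ∧ y ≤ x} := by
      ext y
      simp only [mem_inter_iff, mem_ofPred_eq, mem_Iic,
        Real.rpow_inv_lt_iff_of_pos ht.le (hF0 y) hβ]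
    dsimp only
    rw [Measure.restrict_apply (measurableSet_lt measurable_const hcont.measurable), hset,
      measure_setOf_lt_apply_and_le hFmono hFcont hFbot ha hν x (Real.rpow_pos_of_pos ht _),
      ← Real.rpow_mul ht.le, ← Real.rpow_mul (hF0 x), inv_mul_eq_div, mul_div_cancel₀ a hβ.ne']
  rw [lintegral_eq_lintegral_meas_lt _ (.of_forall fun y => Real.rpow_nonneg (hF0 y) β)
      hcont.measurable.aemeasurable, setLIntegral_congr_fun measurableSet_Ioi hslice,
    lintegral_Ioi_ofReal_rpow_sub_rpow (Real.rpow_nonneg (hF0 x) β) (div_pos ha hβ),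
    ← Real.rpow_mul (hF0 x)]
  congr 2 <;> field_simp

end PowerCDF

namespace ProbabilityTheory

variable {Ω β γ : Type*} [MeasurableSpace Ω] [MeasurableSpace β] [MeasurableSpace γ]
  {μ : Measure Ω}

lemma IndepFun.measure_setOf_eq_lintegral [IsFiniteMeasure μ] {Y : Ω → β} {Z : Ω → γ}
    (h : IndepFun Y Z μ) (hY : Measurable Y) (hZ : Measurable Z) {P : β → γ → Prop}
    (hP : MeasurableSet {p : β × γ | P p.1 p.2}) :
    μ {ω | P (Y ω) (Z ω)} = ∫⁻ y, μ {ω | P y (Z ω)} ∂(μ.map Y) := by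
  calc μ {ω | P (Y ω) (Z ω)} = μ.map (fun ω => (Y ω, Z ω)) {p | P p.1 p.2} :=
        (Measure.map_apply (hY.prodMk hZ) hP).symm
    _ = ∫⁻ y, μ.map Z (Prod.mk y ⁻¹' {p | P p.1 p.2}) ∂(μ.map Y) := by
        rw [(indepFun_iff_map_prod_eq_prod_map_map hY.aemeasurable hZ.aemeasurable).1 h,
          Measure.prod_apply hP]
    _ = ∫⁻ y, μ {ω | P y (Z ω)} ∂(μ.map Y) :=
        lintegral_congr fun y => Measure.map_apply hZ (measurable_prodMk_left hP)

lemma iIndepFun.indepFun_indicator_Iic [Zero β] {X : ℕ → Ω → β} (h : iIndepFun X μ)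
    (hX : ∀ i, Measurable (X i)) (N : ℕ) :
    IndepFun (X (N + 1)) (fun ω => (Iic N).indicator (X · ω)) μ := by
  have hext : Measurable fun (u : Finset.range (N + 1) → β) (i : ℕ) =>
      if hi : i ∈ Finset.range (N + 1) then u ⟨i, hi⟩ else 0 := by
    refine measurable_pi_lambda _ fun i => ?_
    split_ifs
    exacts [measurable_pi_apply _, measurable_const]
  convert (h.indepFun_finset {N + 1} (Finset.range (N + 1)) (by simp) hX).comp
    (measurable_pi_apply ⟨N + 1, Finset.mem_singleton_self _⟩) hext using 1
  · rfl
  · funext ω i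
    simp [indicator_apply]

lemma iIndepSet.compl {s : ℕ → Set Ω} (h : iIndepSet s μ) : iIndepSet (fun n => (s n)ᶜ) μ := by
  rw [iIndepSet_iff_iIndep] at h ⊢
  convert h using 2 with n
  refine le_antisymm (MeasurableSpace.generateFrom_le ?_) (MeasurableSpace.generateFrom_le ?_) <;>
    rintro _ rfl
  · exact (MeasurableSpace.measurableSet_generateFrom (mem_singleton _)).compl
  · simpa using (MeasurableSpace.measurableSet_generateFrom (mem_singleton (s n)ᶜ)).compl

end ProbabilityTheory

section Records

variable {α : Type*} [Preorder α]

def IsRecord (v : ℕ → α) (n : ℕ) : Prop := ∀ i < n, v i ≤ v n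

lemma isRecord_zero (v : ℕ → α) : IsRecord v 0 := fun i hi => absurd hi (Nat.not_lt_zero i)

lemma lt_sup'_range_iff_not_isRecord {β : Type*} [LinearOrder β] (v : ℕ → β) (n : ℕ) :
    v n < (Finset.range (n + 1)).sup' Finset.nonempty_range_add_one v ↔ ¬IsRecord v n := by
  simp only [Finset.lt_sup'_iff, IsRecord, not_forall, not_le, Finset.mem_range, exists_prop]
  constructor
  · rintro ⟨i, hi, hlt⟩
    exact ⟨i, (Nat.lt_succ_iff.1 hi).lt_of_ne (by rintro rfl; exact lt_irrefl _ hlt), hlt⟩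
  · rintro ⟨i, hi, hlt⟩
    exact ⟨i, hi.trans (Nat.lt_succ_self n), hlt⟩

def RecordsAndMaxLE (S : Finset ℕ) (N : ℕ) (x : α) (v : ℕ → α) : Prop :=
  (∀ n ∈ S, IsRecord v n) ∧ ∀ i ≤ N, v i ≤ x

lemma RecordsAndMaxLE.mono {S : Finset ℕ} {N : ℕ} {x y : α} {v : ℕ → α} (hxy : x ≤ y)
    (h : RecordsAndMaxLE S N x v) : RecordsAndMaxLE S N y v :=
  ⟨h.1, fun i hi => (h.2 i hi).trans hxy⟩

lemma recordsAndMaxLE_congr {S : Finset ℕ} {N : ℕ} {x : α} {v w : ℕ → α}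
    (hS : S ⊆ Finset.range (N + 1)) (hvw : ∀ i ≤ N, v i = w i) :
    RecordsAndMaxLE S N x v ↔ RecordsAndMaxLE S N x w := by
  have hSN : ∀ n ∈ S, n ≤ N := fun n hn => Nat.lt_succ_iff.1 (Finset.mem_range.1 (hS hn))
  refine and_congr (forall₂_congr fun n hn => forall₂_congr fun i hi => ?_)
    (forall₂_congr fun i hi => by rw [hvw i hi])
  rw [hvw i (hi.le.trans (hSN n hn)), hvw n (hSN n hn)]

lemma recordsAndMaxLE_succ_iff {S : Finset ℕ} {N : ℕ} {x : α} {v : ℕ → α} :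
    RecordsAndMaxLE S (N + 1) x v ↔
      v (N + 1) ≤ x ∧
        RecordsAndMaxLE (S.erase (N + 1)) N (if N + 1 ∈ S then v (N + 1) else x) v := by
  have hle_succ : ∀ {p : ℕ → Prop}, (∀ i ≤ N + 1, p i) ↔ (∀ i ≤ N, p i) ∧ p (N + 1) :=
    fun {p} => ⟨fun h => ⟨fun i hi => h i (by omega), h _ le_rfl⟩,
      fun h i hi => (Nat.le_succ_iff.1 hi).elim (h.1 i) fun hi => hi ▸ h.2⟩
  simp only [RecordsAndMaxLE, hle_succ]
  split_ifs with hN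
  · have hrec : IsRecord v (N + 1) ↔ ∀ i ≤ N, v i ≤ v (N + 1) :=
      forall_congr' fun i => by rw [Nat.lt_succ_iff]
    constructor
    · rintro ⟨hrecs, -, hx⟩
      exact ⟨hx, fun n hn => hrecs n (Finset.mem_of_mem_erase hn), hrec.1 (hrecs _ hN)⟩
    · rintro ⟨hx, hrecs, hmax⟩
      refine ⟨fun n hn => ?_, fun i hi => (hmax i hi).trans hx, hx⟩
      rcases eq_or_ne n (N + 1) with rfl | hne
      exacts [hrec.2 hmax, hrecs n (Finset.mem_erase.2 ⟨hne, hn⟩)]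
  · rw [Finset.erase_eq_of_notMem hN]
    tauto

end Records

section Measurability

variable {γ : Type*} [MeasurableSpace γ] {g : γ → ℕ → ℝ}

lemma measurableSet_isRecord (hg : Measurable g) (n : ℕ) :
    MeasurableSet {c | IsRecord (g c) n} := by
  simp only [IsRecord, ofPred_forall]
  exact .iInter fun i => .iInter fun _ =>
    measurableSet_le ((measurable_pi_apply i).comp hg) ((measurable_pi_apply n).comp hg)

lemma measurableSet_recordsAndMaxLE (S : Finset ℕ) (N : ℕ) {f : γ → ℝ} (hf : Measurable f)
    (hg : Measurable g) : MeasurableSet {c | RecordsAndMaxLE S N (f c) (g c)} := by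
  simp only [RecordsAndMaxLE, ofPred_and, ofPred_forall]
  exact .inter (.iInter fun n => .iInter fun _ => measurableSet_isRecord hg n)
    (.iInter fun i => .iInter fun _ => measurableSet_le ((measurable_pi_apply i).comp hg) hf)

end Measurability

structure IsFAlphaScheme {Ω : Type*} [MeasurableSpace Ω] (μ : Measure Ω) (F : ℝ → ℝ)
    (α : ℕ → ℝ) (X : ℕ → Ω → ℝ) : Prop where
  monotone : Monotone F
  continuous : Continuous F
  tendsto_atBot : Tendsto F atBot (𝓝 0)
  tendsto_atTop : Tendsto F atTop (𝓝 1)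
  pos : ∀ i, 0 < α i
  measurable : ∀ i, Measurable (X i)
  iIndepFun : iIndepFun X μ
  law : ∀ i x, μ {ω | X i ω ≤ x} = ENNReal.ofReal (F x ^ α i)

namespace IsFAlphaScheme

variable {Ω : Type*} [MeasurableSpace Ω] {μ : Measure Ω} {F : ℝ → ℝ}
  {α : ℕ → ℝ} {X : ℕ → Ω → ℝ}

lemma sum_range_pos (h : IsFAlphaScheme μ F α X) (n : ℕ) : 0 < ∑ i ∈ Finset.range (n + 1), α i :=
  Finset.sum_pos (fun i _ => h.pos i) Finset.nonempty_range_add_one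

lemma map_apply_Iic (h : IsFAlphaScheme μ F α X) (i : ℕ) (x : ℝ) :
    μ.map (X i) (Iic x) = ENNReal.ofReal (F x ^ α i) := by
  rw [Measure.map_apply (h.measurable i) measurableSet_Iic]
  exact h.law i x

lemma measure_recordsAndMaxLE_succ [IsFiniteMeasure μ] (h : IsFAlphaScheme μ F α X) {N : ℕ}
    {S : Finset ℕ} (hS : S.erase (N + 1) ⊆ Finset.range (N + 1)) (x : ℝ) :
    μ {ω | RecordsAndMaxLE S (N + 1) x (X · ω)} = ∫⁻ y in Iic x,
      μ {ω | RecordsAndMaxLE (S.erase (N + 1)) N (if N + 1 ∈ S then y else x) (X · ω)}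
        ∂(μ.map (X (N + 1))) := by
  set level : ℝ → ℝ := fun y => if N + 1 ∈ S then y else x with hlevel
  set Z : Ω → ℕ → ℝ := fun ω => (Iic N).indicator (X · ω) with hZ
  have hZX : ∀ ω, ∀ i ≤ N, Z ω i = X i ω := fun ω i hi => indicator_of_mem (mem_Iic.2 hi) _
  have hlevel_meas : Measurable level := by
    by_cases hN : N + 1 ∈ S <;> simp only [hlevel, hN, if_true, if_false] <;> fun_prop
  have hZ_meas : Measurable Z := measurable_pi_lambda _ fun i => by
    by_cases hi : i ∈ Iic N <;> simp only [hZ, indicator_apply, hi, if_true, if_false]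
    exacts [h.measurable i, measurable_const]
  have hP : MeasurableSet {p : ℝ × (ℕ → ℝ) |
      p.1 ≤ x ∧ RecordsAndMaxLE (S.erase (N + 1)) N (level p.1) p.2} :=
    (measurableSet_le measurable_fst measurable_const).inter
      (measurableSet_recordsAndMaxLE _ _ (hlevel_meas.comp measurable_fst) measurable_snd)
  have hevent : {ω | RecordsAndMaxLE S (N + 1) x (X · ω)} = {ω | X (N + 1) ω ≤ x ∧
      RecordsAndMaxLE (S.erase (N + 1)) N (level (X (N + 1) ω)) (Z ω)} := by
    ext ω
    rw [mem_ofPred_eq, mem_ofPred_eq, recordsAndMaxLE_succ_iff]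
    exact and_congr_right' <| recordsAndMaxLE_congr hS fun i hi => (hZX ω i hi).symm
  rw [hevent, (h.iIndepFun.indepFun_indicator_Iic h.measurable N).measure_setOf_eq_lintegral
    (h.measurable _) hZ_meas
    (P := fun y v => y ≤ x ∧ RecordsAndMaxLE (S.erase (N + 1)) N (level y) v) hP,
    ← lintegral_indicator measurableSet_Iic]
  refine lintegral_congr fun y => ?_
  by_cases hy : y ≤ x
  · simp only [hy, true_and, indicator_of_mem (mem_Iic.2 hy)]
    congr! 3 with ω
    exact recordsAndMaxLE_congr hS (hZX ω)
  · simp [hy]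

theorem measure_recordsAndMaxLE [IsFiniteMeasure μ] (h : IsFAlphaScheme μ F α X) (N : ℕ)
    {S : Finset ℕ} (hS : S ⊆ Finset.range (N + 1)) (x : ℝ) :
    μ {ω | RecordsAndMaxLE S N x (X · ω)} =
      ENNReal.ofReal ((∏ n ∈ S, α n / ∑ i ∈ Finset.range (n + 1), α i) *
        F x ^ ∑ i ∈ Finset.range (N + 1), α i) := by
  induction N generalizing S x with
  | zero =>
    have hS0 : ∀ n ∈ S, n = 0 := fun n hn => by simpa using hS hn
    have hprod : ∏ n ∈ S, α n / ∑ i ∈ Finset.range (n + 1), α i = 1 :=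
      Finset.prod_eq_one fun n hn => by simp [hS0 n hn, (h.pos 0).ne']
    have hset : {ω | RecordsAndMaxLE S 0 x (X · ω)} = {ω | X 0 ω ≤ x} := by
      ext ω
      refine ⟨fun hω => hω.2 0 le_rfl, fun hω => ⟨fun n hn => ?_, fun i hi => ?_⟩⟩
      · exact hS0 n hn ▸ isRecord_zero _
      · rwa [Nat.le_zero.1 hi]
    rw [hset, h.law, hprod, one_mul, Finset.sum_range_one]
  | succ N ih =>
    have hS' : S.erase (N + 1) ⊆ Finset.range (N + 1) := fun n hn => by
      have := hS (Finset.mem_of_mem_erase hn)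
      have := Finset.ne_of_mem_erase hn
      simp only [Finset.mem_range] at *
      omega
    have hF0 : 0 ≤ F x := h.monotone.le_of_tendsto h.tendsto_atBot x
    have hc : 0 ≤ ∏ n ∈ S.erase (N + 1), α n / ∑ i ∈ Finset.range (n + 1), α i :=
      Finset.prod_nonneg fun n _ => div_nonneg (h.pos n).le (h.sum_range_pos n).le
    rw [h.measure_recordsAndMaxLE_succ hS' x,
      setLIntegral_congr_fun measurableSet_Iic fun y _ => ih hS' _, Finset.sum_range_succ α (N + 1)]
    by_cases hN : N + 1 ∈ S
    · simp only [if_pos hN, ENNReal.ofReal_mul hc]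
      rw [lintegral_const_mul' _ _ ENNReal.ofReal_ne_top, setLIntegral_Iic_ofReal_rpow h.monotone
        h.continuous h.tendsto_atBot (h.pos _) (h.sum_range_pos N) (h.map_apply_Iic _) x,
        ← ENNReal.ofReal_mul hc, ← Finset.mul_prod_erase S _ hN, Finset.sum_range_succ α (N + 1),
        add_comm (∑ i ∈ Finset.range (N + 1), α i)]
      congr 1
      ring
    · simp only [if_neg hN, Finset.erase_eq_of_notMem hN] at hc ⊢
      rw [setLIntegral_const, h.map_apply_Iic, ← ENNReal.ofReal_mul (by positivity),
        Real.rpow_add' hF0 (add_pos (h.sum_range_pos N) (h.pos _)).ne', mul_assoc]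

theorem measure_records [IsFiniteMeasure μ] (h : IsFAlphaScheme μ F α X) (S : Finset ℕ) :
    μ {ω | ∀ n ∈ S, IsRecord (X · ω) n} =
      ENNReal.ofReal (∏ n ∈ S, α n / ∑ i ∈ Finset.range (n + 1), α i) := by
  set N := S.sup id
  have hS : S ⊆ Finset.range (N + 1) := fun n hn =>
    Finset.mem_range.2 (Nat.lt_succ_of_le (Finset.le_sup (f := id) hn))
  set E : ℕ → Set Ω := fun k => {ω | RecordsAndMaxLE S N (k : ℝ) (X · ω)} with hE
  have hunion : ⋃ k, E k = {ω | ∀ n ∈ S, IsRecord (X · ω) n} := by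
    ext ω
    simp only [mem_iUnion, hE, mem_ofPred_eq]
    refine ⟨fun ⟨k, hk⟩ => hk.1, fun hrec => ?_⟩
    obtain ⟨k, hk⟩ :=
      exists_nat_ge ((Finset.range (N + 1)).sup' Finset.nonempty_range_add_one (X · ω))
    exact ⟨k, hrec, fun i hi =>
      (Finset.le_sup' (X · ω) (Finset.mem_range.2 (Nat.lt_succ_of_le hi))).trans hk⟩
  have hlim : Tendsto (fun k => μ (E k)) atTop
      (𝓝 (ENNReal.ofReal (∏ n ∈ S, α n / ∑ i ∈ Finset.range (n + 1), α i))) := by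
    simp only [hE, h.measure_recordsAndMaxLE N hS]
    have hpow := (h.tendsto_atTop.comp tendsto_natCast_atTop_atTop).rpow_const
      (Or.inr (h.sum_range_pos N).le)
    simpa using ENNReal.tendsto_ofReal (tendsto_const_nhds.mul hpow)
  rw [← hunion]
  exact tendsto_nhds_unique
    (tendsto_measure_iUnion_atTop fun k l hkl ω hω => hω.mono (Nat.cast_le.2 hkl)) hlim

theorem iIndepSet_records [IsFiniteMeasure μ] (h : IsFAlphaScheme μ F α X) :
    iIndepSet (fun n => {ω | IsRecord (X · ω) n}) μ := by
  rw [iIndepSet_iff_meas_biInter (measurableSet_isRecord (measurable_pi_lambda _ h.measurable))]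
  intro S
  have hinter : ⋂ n ∈ S, {ω | IsRecord (X · ω) n} = {ω | ∀ n ∈ S, IsRecord (X · ω) n} := by
    ext
    simp
  rw [hinter, h.measure_records, ENNReal.ofReal_prod_of_nonneg fun n _ =>
    div_nonneg (h.pos n).le (h.sum_range_pos n).le]
  exact Finset.prod_congr rfl fun n _ => by simpa using (h.measure_records {n}).symm

theorem measure_compl_record_succ [IsProbabilityMeasure μ] (h : IsFAlphaScheme μ F α X) (n : ℕ) :
    μ {ω | IsRecord (X · ω) (n + 1)}ᶜ = ENNReal.ofReal
      ((∑ i ∈ Finset.range (n + 1), α i) / ∑ i ∈ Finset.range (n + 2), α i) := by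
  have hrec : μ {ω | IsRecord (X · ω) (n + 1)} = ENNReal.ofReal
      (α (n + 1) / ∑ i ∈ Finset.range (n + 2), α i) := by
    simpa using h.measure_records {n + 1}
  rw [measure_compl (measurableSet_isRecord (measurable_pi_lambda _ h.measurable) _)
    (measure_ne_top _ _), measure_univ, hrec, ← ENNReal.ofReal_one,
    ← ENNReal.ofReal_sub _ (div_nonneg (h.pos _).le (h.sum_range_pos _).le)]
  congr 1
  have hne := (add_pos (h.sum_range_pos n) (h.pos (n + 1))).ne'
  rw [Finset.sum_range_succ α (n + 1)]
  field_simp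
  ring

end IsFAlphaScheme

theorem stmt18_general {Ω : Type*} [MeasurableSpace Ω] (μ : Measure Ω) [IsProbabilityMeasure μ]
    (F : ℝ → ℝ) (hFmono : Monotone F) (hFcont : Continuous F)
    (hFbot : Tendsto F atBot (nhds 0)) (hFtop : Tendsto F atTop (nhds 1))
    (α : ℕ → ℝ) (hαpos : ∀ i, 0 < α i)
    (X : ℕ → Ω → ℝ) (hXmeas : ∀ i, Measurable (X i))
    (hindep : ProbabilityTheory.iIndepFun X μ)
    (hlaw : ∀ i x, μ {ω | X i ω ≤ x} = ENNReal.ofReal (F x ^ α i))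
    -- `M n` is the partial maximum of the first `n + 1` observations
    (M : ℕ → Ω → ℝ)
    (hMdef : ∀ n ω, M n ω = (Finset.range (n + 1)).sup' Finset.nonempty_range_add_one
      fun i => X i ω) :
    (∑' n : ℕ, ENNReal.ofReal ((∑ i ∈ Finset.range (n + 1), α i)
        / ∑ i ∈ Finset.range (n + 2), α i) ≠ ⊤ →
      μ (limsup (fun n => {ω | X n ω < M n ω}) atTop) = 0) ∧
    (∑' n : ℕ, ENNReal.ofReal ((∑ i ∈ Finset.range (n + 1), α i)
        / ∑ i ∈ Finset.range (n + 2), α i) = ⊤ →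
      μ (limsup (fun n => {ω | X n ω < M n ω}) atTop) = 1) := by
  have h : IsFAlphaScheme μ F α X := ⟨hFmono, hFcont, hFbot, hFtop, hαpos, hXmeas, hindep, hlaw⟩
  have hE : ∀ n, {ω | X n ω < M n ω} = {ω | IsRecord (X · ω) n}ᶜ := fun n => by
    ext ω
    simp only [hMdef, mem_ofPred_eq, mem_compl_iff]
    exact lt_sup'_range_iff_not_isRecord (X · ω) n
  have hsum : ∑' n, μ {ω | X n ω < M n ω} = ∑' n : ℕ, ENNReal.ofReal
      ((∑ i ∈ Finset.range (n + 1), α i) / ∑ i ∈ Finset.range (n + 2), α i) := by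
    rw [tsum_eq_zero_add' ENNReal.summable]
    simp [hE, h.measure_compl_record_succ, isRecord_zero]
  simp only [hE] at hsum ⊢
  exact ⟨fun hfin => measure_limsup_atTop_eq_zero (hsum ▸ hfin),
    fun hinf => measure_limsup_eq_one
      (fun n => (measurableSet_isRecord (measurable_pi_lambda _ h.measurable) n).compl)
      h.iIndepSet_records.compl (hsum ▸ hinf)⟩

theorem stmt18 {Ω : Type*} [MeasurableSpace Ω] (μ : Measure Ω) [IsProbabilityMeasure μ]
    (F : ℝ → ℝ) (hFmono : Monotone F) (hFcont : Continuous F)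
    (hFbot : Tendsto F atBot (nhds 0)) (hFtop : Tendsto F atTop (nhds 1))
    (α : ℕ → ℝ) (hαpos : ∀ i, 0 < α i) (hα1 : α 0 = 1)
    (X : ℕ → Ω → ℝ) (hXmeas : ∀ i, Measurable (X i))
    (hindep : ProbabilityTheory.iIndepFun X μ)
    (hlaw : ∀ i x, μ {ω | X i ω ≤ x} = ENNReal.ofReal (F x ^ α i))
    -- `M n` is the partial maximum of the first `n + 1` observations
    (M : ℕ → Ω → ℝ)
    (hMdef : ∀ n ω, M n ω = (Finset.range (n + 1)).sup' Finset.nonempty_range_add_one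
      fun i => X i ω)
    (hαtop : Tendsto α atTop atTop)
    (hratio : Tendsto (fun n => (∑ i ∈ Finset.range (n + 1), α i)
        / ∑ i ∈ Finset.range (n + 2), α i) atTop (nhds 0)) :
    (∑' n : ℕ, ENNReal.ofReal ((∑ i ∈ Finset.range (n + 1), α i)
        / ∑ i ∈ Finset.range (n + 2), α i) ≠ ⊤ →
      μ (limsup (fun n => {ω | X n ω < M n ω}) atTop) = 0) ∧
    (∑' n : ℕ, ENNReal.ofReal ((∑ i ∈ Finset.range (n + 1), α i)
        / ∑ i ∈ Finset.range (n + 2), α i) = ⊤ →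
      μ (limsup (fun n => {ω | X n ω < M n ω}) atTop) = 1) :=
  stmt18_general μ F hFmono hFcont hFbot hFtop α hαpos X hXmeas hindep hlaw M hMdef
end

section
/- In the F^α-scheme with α_n/A_n → 0: if ∑_{n=1}^∞ α_n/A_n < ∞ then P(M_n = X_n infinitely often) = 0 (almost surely only finitely many new observations are maxima), while if ∑_{n=1}^∞ α_n/A_n = ∞ then P(M_n = X_n infinitely often) = 1. -/
/-!
The record events `A n = {X i ≤ X n for all i < n}` are independent with
`P(A n) = α n / ∑_{i ≤ n} α i`, so both halves are the Borel–Cantelli lemmas. Independence follows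
from the product formula
`P(⋂_{j ∈ s} A j ∩ {max_{i<n} X i ≤ y}) = (∏_{j ∈ s} P(A j)) · F(y) ^ ∑_{i<n} α i`,
proved by induction on `n`: when `n ∈ s` one integrates over the value `t` of `X n`, which is
independent of the past, and `∫_{t ≤ y} F(t)^c dF(t)^a = a / (a + c) · F(y)^(a + c)`, because `F`
pushes the law `F^a` forward to the law with density `a u^(a-1)` on `(0, 1)`.
-/

open MeasureTheory ProbabilityTheory Filter Set Topology
open scoped ENNReal

noncomputable def powerLaw (a b : ℝ) : Measure ℝ :=
  (volume.restrict (Ioo 0 b)).withDensity fun u => ENNReal.ofReal (a * u ^ (a - 1))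

lemma lintegral_rpow_powerLaw {a b : ℝ} (c : ℝ) (ha : 0 < a) (hc : 0 ≤ c) (hb : 0 ≤ b) :
    ∫⁻ u, ENNReal.ofReal (u ^ c) ∂(powerLaw a b) = ENNReal.ofReal (a / (a + c) * b ^ (a + c)) := by
  have hac : 0 < a + c := by linarith
  have hdens : ∀ u ∈ Ioo (0 : ℝ) b, ENNReal.ofReal (a * u ^ (a - 1)) * ENNReal.ofReal (u ^ c)
      = ENNReal.ofReal (a * u ^ (a + c - 1)) := fun u hu => by
    rw [← ENNReal.ofReal_mul (by have := Real.rpow_nonneg hu.1.le (a - 1); positivity), mul_assoc,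
      ← Real.rpow_add hu.1]
    ring_nf
  have hint : IntegrableOn (fun u : ℝ => a * u ^ (a + c - 1)) (Ioc 0 b) :=
    ((intervalIntegrable_iff_integrableOn_Ioc_of_le hb).1
      (intervalIntegral.intervalIntegrable_rpow' (by linarith))).const_mul a
  rw [powerLaw, lintegral_withDensity_eq_lintegral_mul _ (by fun_prop) (by fun_prop)]
  simp only [Pi.mul_apply]
  rw [setLIntegral_congr_fun measurableSet_Ioo hdens, setLIntegral_congr Ioo_ae_eq_Ioc,
    ← ofReal_integral_eq_lintegral_ofReal hint
      (ae_restrict_of_forall_mem measurableSet_Ioc fun u hu => by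
        have := Real.rpow_nonneg hu.1.le (a + c - 1); positivity),
    ← intervalIntegral.integral_of_le hb, intervalIntegral.integral_const_mul,
    integral_rpow (Or.inl (by linarith)), sub_add_cancel, Real.zero_rpow hac.ne', sub_zero]
  congr 1
  field_simp

lemma powerLaw_univ {a b : ℝ} (ha : 0 < a) (hb : 0 ≤ b) :
    powerLaw a b univ = ENNReal.ofReal (b ^ a) := by
  simpa [div_self ha.ne'] using lintegral_rpow_powerLaw 0 ha le_rfl hb

lemma powerLaw_Iic {a b : ℝ} (ha : 0 < a) (x : ℝ) :
    powerLaw a b (Iic x) = ENNReal.ofReal (max (min x b) 0 ^ a) := by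
  have hset : (Iic x ∩ Ioo 0 b : Set ℝ) =ᵐ[volume] Ioo 0 (min x b) := by
    rw [← Iio_inter_Ioo]
    exact Iio_ae_eq_Iic.symm.inter (ae_eq_refl _)
  rw [powerLaw, withDensity_apply _ measurableSet_Iic, Measure.restrict_restrict measurableSet_Iic,
    setLIntegral_congr hset]
  rcases le_total (min x b) 0 with h | h
  · rw [Ioo_eq_empty (not_lt.2 h), Measure.restrict_empty, lintegral_zero_measure, max_eq_right h,
      Real.zero_rpow ha.ne', ENNReal.ofReal_zero]
  · rw [max_eq_left h, ← powerLaw_univ ha h, powerLaw, withDensity_apply _ MeasurableSet.univ,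
      Measure.restrict_univ]

section ProbabilityIntegralTransform

variable {F : ℝ → ℝ}

lemma exists_preimage_Iic_eq_Iic (hmono : Monotone F) (hcont : Continuous F) {u : ℝ}
    (hne : (F ⁻¹' Iic u).Nonempty) (hlt : ∃ x, u < F x) :
    ∃ s, F ⁻¹' Iic u = Iic s ∧ F s = u := by
  obtain ⟨x, hx⟩ := hlt
  have hub : ∀ t ∈ F ⁻¹' Iic u, t ≤ x := fun t ht => (hmono.reflect_lt (lt_of_le_of_lt ht hx)).le
  set s := sSup (F ⁻¹' Iic u)
  have hs : F s ≤ u := (isClosed_Iic.preimage hcont).csSup_mem hne ⟨x, hub⟩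
  obtain ⟨t, -, hFt⟩ := intermediate_value_Icc (csSup_le hne hub) hcont.continuousOn ⟨hs, hx.le⟩
  refine ⟨s, Subset.antisymm (fun t ht => le_csSup ⟨x, hub⟩ ht) fun t ht => (hmono ht).trans hs, ?_⟩
  exact hs.antisymm (hFt ▸ hmono (le_csSup ⟨x, hub⟩ (show F t ≤ u from hFt.le)))

lemma map_eq_powerLaw (hmono : Monotone F) (hcont : Continuous F)
    (hbot : Tendsto F atBot (𝓝 0)) (htop : Tendsto F atTop (𝓝 1))
    {ν : Measure ℝ} [IsFiniteMeasure ν] {a b : ℝ} (ha : 0 < a) (hb0 : 0 ≤ b) (hb1 : b ≤ 1)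
    (hν : ∀ x, ν (Iic x) = ENNReal.ofReal (min (F x) b ^ a)) :
    ν.map F = powerLaw a b := by
  refine Measure.ext_of_Iic _ _ fun u => ?_
  rw [Measure.map_apply hcont.measurable measurableSet_Iic, powerLaw_Iic ha]
  rcases lt_or_ge u 1 with hu1 | hu1
  · by_cases hne : (F ⁻¹' Iic u).Nonempty
    · obtain ⟨s, hs, hFs⟩ := exists_preimage_Iic_eq_Iic hmono hcont hne
        (htop.eventually (eventually_gt_nhds hu1)).exists
      rw [hs, hν, hFs, max_eq_left (le_min (hFs ▸ hmono.le_of_tendsto hbot s) hb0)]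
    · have hu0 : u ≤ 0 := by
        by_contra! hu0
        obtain ⟨t, ht⟩ := (hbot.eventually (eventually_lt_nhds hu0)).exists
        exact hne ⟨t, ht.le⟩
      rw [not_nonempty_iff_eq_empty.1 hne, measure_empty,
        max_eq_right ((min_le_left _ _).trans hu0), Real.zero_rpow ha.ne', ENNReal.ofReal_zero]
  · have hcdf : Continuous fun v : ℝ => ENNReal.ofReal (min v b ^ a) :=
      ENNReal.continuous_ofReal.comp
        ((continuous_id.min continuous_const).rpow_const fun _ => Or.inr ha.le)
    have hlim := (hcdf.tendsto 1).comp htop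
    rw [min_eq_right hb1] at hlim
    have hpre : F ⁻¹' Iic u = univ :=
      eq_univ_of_forall fun x => (hmono.ge_of_tendsto htop x).trans hu1
    rw [hpre, tendsto_nhds_unique (tendsto_measure_Iic_atTop ν)
        (by simpa only [hν, Function.comp_def] using hlim),
      min_eq_right (hb1.trans hu1), max_eq_left hb0]

lemma setLIntegral_Iic_rpow (hmono : Monotone F) (hcont : Continuous F)
    (hbot : Tendsto F atBot (𝓝 0)) (htop : Tendsto F atTop (𝓝 1))
    {ν : Measure ℝ} {a c : ℝ} (ha : 0 < a) (hc : 0 ≤ c)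
    (hν : ∀ x, ν (Iic x) = ENNReal.ofReal (F x ^ a)) (y : ℝ) :
    ∫⁻ t in Iic y, ENNReal.ofReal (F t ^ c) ∂ν = ENNReal.ofReal (a / (a + c) * F y ^ (a + c)) := by
  have hFy := hmono.le_of_tendsto hbot y
  have : IsFiniteMeasure (ν.restrict (Iic y)) :=
    isFiniteMeasure_restrict.2 (by rw [hν]; exact ENNReal.ofReal_ne_top)
  have hres : ∀ x, ν.restrict (Iic y) (Iic x) = ENNReal.ofReal (min (F x) (F y) ^ a) := fun x => by
    rw [Measure.restrict_apply measurableSet_Iic, Iic_inter_Iic, hν, hmono.map_min]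
  rw [← lintegral_map (f := fun u => ENNReal.ofReal (u ^ c)) (by fun_prop) hcont.measurable,
    map_eq_powerLaw hmono hcont hbot htop ha hFy (hmono.ge_of_tendsto htop y) hres]
  exact lintegral_rpow_powerLaw c ha hc hFy

end ProbabilityIntegralTransform

namespace ProbabilityTheory

variable {Ω : Type*} [MeasurableSpace Ω] {μ : Measure Ω}

lemma IndepFun.measure_preimage_eq_lintegral {β γ : Type*} [MeasurableSpace β] [MeasurableSpace γ]
    [IsFiniteMeasure μ] {Z : Ω → β} {Y : Ω → γ} (hZ : Measurable Z) (hY : Measurable Y)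
    (h : IndepFun Z Y μ) {E : Set (β × γ)} (hE : MeasurableSet E) :
    μ ((fun ω => (Z ω, Y ω)) ⁻¹' E) = ∫⁻ t, μ (Z ⁻¹' {z | (z, t) ∈ E}) ∂(μ.map Y) := by
  rw [← Measure.map_apply (hZ.prodMk hY) hE,
    (indepFun_iff_map_prod_eq_prod_map_map hZ.aemeasurable hY.aemeasurable).1 h,
    Measure.prod_apply_symm hE]
  exact lintegral_congr fun t => Measure.map_apply hZ (measurable_prodMk_right hE)

lemma IndepFun.measure_le_and_le_eq_setLIntegral [IsFiniteMeasure μ] {R : Ω → EReal} {Y : Ω → ℝ}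
    (hR : Measurable R) (hY : Measurable Y) (h : IndepFun R Y μ) (y : ℝ) :
    μ {ω | R ω ≤ Y ω ∧ Y ω ≤ y} = ∫⁻ t in Iic y, μ {ω | R ω ≤ t} ∂(μ.map Y) := by
  have hE : MeasurableSet {p : EReal × ℝ | p.1 ≤ p.2 ∧ p.2 ≤ y} :=
    (measurableSet_le measurable_fst (measurable_coe_real_ereal.comp measurable_snd)).inter
      (measurableSet_le measurable_snd measurable_const)
  rw [← lintegral_indicator measurableSet_Iic]
  refine (h.measure_preimage_eq_lintegral hR hY hE).trans (lintegral_congr fun t => ?_)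
  by_cases ht : t ≤ y <;> simp [ht, Set.preimage]

end ProbabilityTheory

lemma Finset.sup'_range_succ_eq_iff {β : Type*} [LinearOrder β] {f : ℕ → β} {n : ℕ} :
    (Finset.range (n + 1)).sup' Finset.nonempty_range_add_one f = f n ↔ ∀ i < n, f i ≤ f n := by
  rw [le_antisymm_iff, and_iff_left (Finset.le_sup' f (Finset.self_mem_range_succ n)),
    Finset.sup'_le_iff]
  simp only [Finset.mem_range, Nat.forall_lt_succ_right, le_refl, and_true]

section Records

variable {Ω : Type*} {X : ℕ → Ω → ℝ}

def recordEvent (X : ℕ → Ω → ℝ) (n : ℕ) : Set Ω := {ω | ∀ i < n, X i ω ≤ X n ω}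

abbrev pastSigma (X : ℕ → Ω → ℝ) (n : ℕ) : MeasurableSpace Ω :=
  ⨆ i ∈ Iio n, MeasurableSpace.comap (X i) inferInstance

lemma measurable_pastSigma {n i : ℕ} (hi : i < n) : Measurable[pastSigma X n] (X i) :=
  measurable_iff_comap_le.2
    (le_iSup₂ (f := fun j (_ : j ∈ Iio n) => MeasurableSpace.comap (X j) inferInstance) i hi)

lemma measurableSet_forall_le_pastSigma (n : ℕ) (t : ℝ) :
    MeasurableSet[pastSigma X n] {ω | ∀ i < n, X i ω ≤ t} := by
  simp_rw [ofPred_forall]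
  exact .iInter fun i => .iInter fun hi =>
    measurableSet_le (measurable_pastSigma hi) measurable_const

lemma measurableSet_recordEvent_pastSigma {j n : ℕ} (hj : j < n) :
    MeasurableSet[pastSigma X n] (recordEvent X j) := by
  simp_rw [recordEvent, ofPred_forall]
  exact .iInter fun i => .iInter fun hi =>
    measurableSet_le (measurable_pastSigma (hi.trans hj)) (measurable_pastSigma hj)

variable [MeasurableSpace Ω] {μ : Measure Ω}

lemma pastSigma_le (hX : ∀ i, Measurable (X i)) (n : ℕ) : pastSigma X n ≤ ‹MeasurableSpace Ω› :=
  iSup₂_le fun i _ => (hX i).comap_le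

lemma indep_pastSigma (hX : ∀ i, Measurable (X i)) (hind : iIndepFun X μ) (n : ℕ) :
    Indep (pastSigma X n) (MeasurableSpace.comap (X n) inferInstance) μ := by
  simpa [pastSigma] using indep_iSup_of_disjoint (fun i => (hX i).comap_le) hind.iIndep
    (S := Iio n) (T := {n}) (disjoint_singleton_right.2 (lt_irrefl n))


lemma measurableSet_recordEvent (hX : ∀ i, Measurable (X i)) (n : ℕ) :
    MeasurableSet (recordEvent X n) :=
  pastSigma_le hX (n + 1) _ (measurableSet_recordEvent_pastSigma n.lt_succ_self)

lemma measure_inter_forall_le_succ (hX : ∀ i, Measurable (X i)) (hind : iIndepFun X μ) {n : ℕ}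
    {B : Set Ω} (hB : MeasurableSet[pastSigma X n] B) (y : ℝ) :
    μ (B ∩ {ω | ∀ i < n + 1, X i ω ≤ y})
      = μ (B ∩ {ω | ∀ i < n, X i ω ≤ y}) * μ {ω | X n ω ≤ y} := by
  have hset : B ∩ {ω | ∀ i < n + 1, X i ω ≤ y}
      = B ∩ {ω | ∀ i < n, X i ω ≤ y} ∩ X n ⁻¹' Iic y := by
    ext ω
    simp only [mem_inter_iff, mem_ofPred_eq, mem_preimage, mem_Iic, Nat.forall_lt_succ_right,
      and_assoc]
  rw [hset]
  exact (Indep_iff _ _ _).1 (indep_pastSigma hX hind n) _ _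
    (hB.inter (measurableSet_forall_le_pastSigma n y)) ⟨Iic y, measurableSet_Iic, rfl⟩

lemma measure_inter_recordEvent_inter [IsFiniteMeasure μ] (hX : ∀ i, Measurable (X i))
    (hind : iIndepFun X μ) {n : ℕ} {B : Set Ω} (hB : MeasurableSet[pastSigma X n] B) (y : ℝ) :
    μ (B ∩ recordEvent X n ∩ {ω | ∀ i < n + 1, X i ω ≤ y})
      = ∫⁻ t in Iic y, μ (B ∩ {ω | ∀ i < n, X i ω ≤ t}) ∂(μ.map (X n)) := by
  classical
  -- `⊤` off `B`, and the empty supremum `⊥` when `n = 0`, make `{R ≤ t}` exactly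
  -- `B ∩ {max_{i<n} X i ≤ t}`.
  let R : Ω → EReal := B.piecewise (fun ω => ⨆ i ∈ Iio n, (X i ω : EReal)) fun _ => ⊤
  have hR : Measurable[pastSigma X n] R :=
    Measurable.piecewise hB (Measurable.biSup _ (to_countable _) fun i hi =>
      measurable_coe_real_ereal.comp (measurable_pastSigma hi)) measurable_const
  have hRle : ∀ ω (t : ℝ), R ω ≤ t ↔ ω ∈ B ∧ ∀ i < n, X i ω ≤ t := fun ω t => by
    by_cases hω : ω ∈ B <;> simp [R, hω]
  have hRX : IndepFun R (X n) μ := (IndepFun_iff_Indep _ _ _).2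
    (indep_of_indep_of_le_left (indep_pastSigma hX hind n) hR.comap_le)
  calc μ (B ∩ recordEvent X n ∩ {ω | ∀ i < n + 1, X i ω ≤ y})
      = μ {ω | R ω ≤ X n ω ∧ X n ω ≤ y} := by
        congr 1
        ext ω
        simp only [mem_inter_iff, mem_ofPred_eq, recordEvent, hRle, Nat.forall_lt_succ_right]
        exact ⟨fun ⟨h, _, hy⟩ => ⟨h, hy⟩,
          fun ⟨⟨hB, hrec⟩, hy⟩ => ⟨⟨hB, hrec⟩, fun i hi => (hrec i hi).trans hy, hy⟩⟩
    _ = ∫⁻ t in Iic y, μ {ω | R ω ≤ t} ∂(μ.map (X n)) :=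
        hRX.measure_le_and_le_eq_setLIntegral (hR.mono (pastSigma_le hX n) le_rfl) (hX n) y
    _ = ∫⁻ t in Iic y, μ (B ∩ {ω | ∀ i < n, X i ω ≤ t}) ∂(μ.map (X n)) := by
        simp only [hRle]
        rfl

lemma tendsto_measure_inter_forall_le (C : Set Ω) (n : ℕ) :
    Tendsto (fun y : ℝ => μ (C ∩ {ω | ∀ i < n, X i ω ≤ y})) atTop (𝓝 (μ C)) := by
  have hmono : Monotone fun y : ℝ => C ∩ {ω | ∀ i < n, X i ω ≤ y} := fun y z hyz =>
    inter_subset_inter_right _ fun ω hω i hi => (hω i hi).trans hyz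
  have hU : ⋃ y : ℝ, C ∩ {ω | ∀ i < n, X i ω ≤ y} = C := by
    refine Subset.antisymm (iUnion_subset fun _ => inter_subset_left) fun ω hω =>
      mem_iUnion.2 ⟨∑ i ∈ Finset.range n, |X i ω|, hω, fun i hi => (le_abs_self _).trans
        (Finset.single_le_sum (fun j _ => abs_nonneg (X j ω)) (Finset.mem_range.2 hi))⟩
  have := tendsto_measure_iUnion_atTop (μ := μ) hmono
  rwa [hU] at this

noncomputable def recordProb (α : ℕ → ℝ) (n : ℕ) : ℝ := α n / ∑ i ∈ Finset.range (n + 1), α i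

section FAlphaScheme

variable [IsProbabilityMeasure μ] {F : ℝ → ℝ} {α : ℕ → ℝ}
  (hX : ∀ i, Measurable (X i)) (hind : iIndepFun X μ)
  (hmono : Monotone F) (hcont : Continuous F)
  (hbot : Tendsto F atBot (𝓝 0)) (htop : Tendsto F atTop (𝓝 1))
  (hα : ∀ i, 0 < α i) (hlaw : ∀ i x, μ {ω | X i ω ≤ x} = ENNReal.ofReal (F x ^ α i))
include hX hind hmono hcont hbot htop hα hlaw

theorem measure_biInter_recordEvent_inter_forall_le (n : ℕ) :
    ∀ s : Finset ℕ, (∀ j ∈ s, j < n) → ∀ y : ℝ,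
      μ ((⋂ j ∈ s, recordEvent X j) ∩ {ω | ∀ i < n, X i ω ≤ y})
        = (∏ j ∈ s, ENNReal.ofReal (recordProb α j))
          * ENNReal.ofReal (F y ^ ∑ i ∈ Finset.range n, α i) := by
  induction n with
  | zero =>
    intro s hs y
    rw [Finset.eq_empty_of_forall_notMem fun j hj => Nat.not_lt_zero _ (hs j hj)]
    simp
  | succ n ih =>
    intro s hs y
    have hT : 0 ≤ ∑ i ∈ Finset.range n, α i := Finset.sum_nonneg fun i _ => (hα i).le
    have hs' : ∀ j ∈ s.erase n, j < n := fun j hj =>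
      lt_of_le_of_ne (Nat.lt_succ_iff.1 (hs j (Finset.mem_of_mem_erase hj)))
        (Finset.ne_of_mem_erase hj)
    have hB : MeasurableSet[pastSigma X n] (⋂ j ∈ s.erase n, recordEvent X j) :=
      Finset.measurableSet_biInter _ fun j hj => measurableSet_recordEvent_pastSigma (hs' j hj)
    by_cases hn : n ∈ s
    · have hν : ∀ x, μ.map (X n) (Iic x) = ENNReal.ofReal (F x ^ α n) := fun x => by
        rw [Measure.map_apply (hX n) measurableSet_Iic]
        exact hlaw n x
      rw [← Finset.insert_erase hn, Finset.set_biInter_insert, inter_comm (recordEvent X n),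
        measure_inter_recordEvent_inter hX hind hB y, Finset.prod_insert (Finset.notMem_erase n s)]
      simp_rw [ih _ hs']
      rw [lintegral_const_mul' _ _ (ENNReal.prod_ne_top fun _ _ => ENNReal.ofReal_ne_top),
        setLIntegral_Iic_rpow hmono hcont hbot htop (hα n) hT hν y, recordProb,
        Finset.sum_range_succ, add_comm _ (α n),
        ENNReal.ofReal_mul (div_nonneg (hα n).le (by linarith [hα n]))]
      ring
    · rw [Finset.erase_eq_of_notMem hn] at hs' hB
      rw [measure_inter_forall_le_succ hX hind hB y, ih s hs' y, hlaw, mul_assoc,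
        ← ENNReal.ofReal_mul (by have := hmono.le_of_tendsto hbot y; positivity),
        ← Real.rpow_add_of_nonneg (hmono.le_of_tendsto hbot y) hT (hα n).le,
        Finset.sum_range_succ]

theorem measure_biInter_recordEvent (s : Finset ℕ) :
    μ (⋂ j ∈ s, recordEvent X j) = ∏ j ∈ s, ENNReal.ofReal (recordProb α j) := by
  set n := s.sup id + 1
  have hs : ∀ j ∈ s, j < n := fun j hj => Nat.lt_succ_of_le (Finset.le_sup (f := id) hj)
  have hT : 0 ≤ ∑ i ∈ Finset.range n, α i := Finset.sum_nonneg fun i _ => (hα i).le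
  refine tendsto_nhds_unique (tendsto_measure_inter_forall_le (X := X) _ n) ?_
  simp_rw [measure_biInter_recordEvent_inter_forall_le hX hind hmono hcont hbot htop hα hlaw n s hs]
  have hF : Tendsto (fun y => ENNReal.ofReal (F y ^ ∑ i ∈ Finset.range n, α i)) atTop (𝓝 1) := by
    simpa [Function.comp_def] using ((ENNReal.continuous_ofReal.comp
      (continuous_id.rpow_const fun _ => Or.inr hT)).tendsto 1).comp htop
  simpa using ENNReal.Tendsto.const_mul hF (Or.inl one_ne_zero)

theorem measure_recordEvent (n : ℕ) : μ (recordEvent X n) = ENNReal.ofReal (recordProb α n) := by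
  simpa using measure_biInter_recordEvent hX hind hmono hcont hbot htop hα hlaw {n}

theorem iIndepSet_recordEvent : iIndepSet (recordEvent X) μ :=
  (iIndepSet_iff_meas_biInter (measurableSet_recordEvent hX)).2 fun s => by
    rw [measure_biInter_recordEvent hX hind hmono hcont hbot htop hα hlaw s]
    exact Finset.prod_congr rfl fun j _ =>
      (measure_recordEvent hX hind hmono hcont hbot htop hα hlaw j).symm

end FAlphaScheme

end Records

theorem stmt19_general {Ω : Type*} [MeasurableSpace Ω] (μ : Measure Ω) [IsProbabilityMeasure μ]
    (F : ℝ → ℝ) (hFmono : Monotone F) (hFcont : Continuous F)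
    (hFbot : Tendsto F atBot (nhds 0)) (hFtop : Tendsto F atTop (nhds 1))
    (α : ℕ → ℝ) (hαpos : ∀ i, 0 < α i)
    (X : ℕ → Ω → ℝ) (hXmeas : ∀ i, Measurable (X i))
    (hindep : ProbabilityTheory.iIndepFun X μ)
    (hlaw : ∀ i x, μ {ω | X i ω ≤ x} = ENNReal.ofReal (F x ^ α i))
    -- `M n` is the partial maximum of the first `n + 1` observations
    (M : ℕ → Ω → ℝ)
    (hMdef : ∀ n ω, M n ω = (Finset.range (n + 1)).sup' Finset.nonempty_range_add_one
      fun i => X i ω) :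
    (∑' n : ℕ, ENNReal.ofReal (α n / ∑ i ∈ Finset.range (n + 1), α i) ≠ ⊤ →
      μ (limsup (fun n => {ω | M n ω = X n ω}) atTop) = 0) ∧
    (∑' n : ℕ, ENNReal.ofReal (α n / ∑ i ∈ Finset.range (n + 1), α i) = ⊤ →
      μ (limsup (fun n => {ω | M n ω = X n ω}) atTop) = 1) := by
  have hM : (fun n => {ω | M n ω = X n ω}) = recordEvent X := by
    ext n ω
    simp only [mem_ofPred_eq, hMdef]
    exact Finset.sup'_range_succ_eq_iff
  have hsum : ∑' n, μ (recordEvent X n) = ∑' n, ENNReal.ofReal (recordProb α n) :=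
    tsum_congr (measure_recordEvent hXmeas hindep hFmono hFcont hFbot hFtop hαpos hlaw)
  rw [hM]
  exact ⟨fun h => measure_limsup_atTop_eq_zero (hsum ▸ h),
    fun h => measure_limsup_eq_one (measurableSet_recordEvent hXmeas)
      (iIndepSet_recordEvent hXmeas hindep hFmono hFcont hFbot hFtop hαpos hlaw) (hsum ▸ h)⟩

theorem stmt19 {Ω : Type*} [MeasurableSpace Ω] (μ : Measure Ω) [IsProbabilityMeasure μ]
    (F : ℝ → ℝ) (hFmono : Monotone F) (hFcont : Continuous F)
    (hFbot : Tendsto F atBot (nhds 0)) (hFtop : Tendsto F atTop (nhds 1))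
    (α : ℕ → ℝ) (hαpos : ∀ i, 0 < α i) (hα1 : α 0 = 1)
    (X : ℕ → Ω → ℝ) (hXmeas : ∀ i, Measurable (X i))
    (hindep : ProbabilityTheory.iIndepFun X μ)
    (hlaw : ∀ i x, μ {ω | X i ω ≤ x} = ENNReal.ofReal (F x ^ α i))
    -- `M n` is the partial maximum of the first `n + 1` observations
    (M : ℕ → Ω → ℝ)
    (hMdef : ∀ n ω, M n ω = (Finset.range (n + 1)).sup' Finset.nonempty_range_add_one
      fun i => X i ω)
    (hratio : Tendsto (fun n => α n / ∑ i ∈ Finset.range (n + 1), α i) atTop (nhds 0)) :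
    (∑' n : ℕ, ENNReal.ofReal (α n / ∑ i ∈ Finset.range (n + 1), α i) ≠ ⊤ →
      μ (limsup (fun n => {ω | M n ω = X n ω}) atTop) = 0) ∧
    (∑' n : ℕ, ENNReal.ofReal (α n / ∑ i ∈ Finset.range (n + 1), α i) = ⊤ →
      μ (limsup (fun n => {ω | M n ω = X n ω}) atTop) = 1) :=
  stmt19_general μ F hFmono hFcont hFbot hFtop α hαpos X hXmeas hindep hlaw M hMdef
end
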